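/- arXiv:1303.0074 — 7 statements merged into one kernel-verified Lean document; each statement's English description precedes it below -/
import Mathlib

section
/- Let n > 1 and m ≥ 1. Suppose α : 𝔭 → W = S^m(ℂ^{n+1}) is an ℝ-linear map satisfying (i) ρ_m(ξ_u)α(ξ_v) = ρ_m(ξ_v)α(ξ_u) for all u, v ∈ ℂⁿ, and (ii) Σ_{j=1}^n ( ρ_m(ξ_{e_j})α(ξ_{e_j}) + ρ_m(ξ_{i e_j})α(ξ_{i e_j}) ) = 0. Then α is conjugate-ℂ-linear, i.e. α(ξ_{iv}) = −i·α(ξ_v) for all v ∈ ℂⁿ, and α takes values in the top component W_m = S^m(V_1). -/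
/-!
On polynomials `ρ(ξ_v) = L_v ∂_y + y D_v`, where `y` is the last variable, `L_v = Σ v_j x_j` and
`D_v = Σ v̄_j ∂_j`. Let `B_v = α v − i α(i v)` and `A_v = α v + i α(i v)` (`linPart`, `antilinPart`:
twice the ℂ-linear and conjugate-linear parts of `α` when `α` is ℝ-linear). The symmetry relation at
`(u, v)`, `(u, iv)`, `(iu, v)`, `(iu, iv)` gives `L_u ∂_y B_v = L_v ∂_y B_u` and
`y D_u B_v = L_v ∂_y A_u`. The second, with the trace condition, kills the `x_j ∂_j` terms of
Euler's identity for `B_v`, so `y ∂_y B_v = m B_v` and `B_v` is a multiple of `y^m`. Then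
`L_u B_v = L_v B_u`, and two independent directions (`n > 1`) force `B = 0`. Finally
`y D_v B_{e_j} = x_j ∂_y A_v` gives `∂_y A_v = 0`, hence `∂_y α(v) = 0`.
-/

open MvPolynomial

noncomputable section

/-- The matrix `ξ_v⁺ = [[0, v],[0, 0]]` in block form. -/
def xiP (n : ℕ) (v : Fin n → ℂ) : Matrix (Fin (n+1)) (Fin (n+1)) ℂ :=
  Matrix.of fun i j => if h : (i : ℕ) < n ∧ j = Fin.last n then v ⟨i, h.1⟩ else 0

/-- The matrix `ξ_v⁻ = [[0, 0],[v*, 0]]` in block form. -/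
def xiM (n : ℕ) (v : Fin n → ℂ) : Matrix (Fin (n+1)) (Fin (n+1)) ℂ :=
  Matrix.of fun i j =>
    if h : i = Fin.last n ∧ (j : ℕ) < n then (starRingEnd ℂ) (v ⟨j, h.2⟩) else 0

/-- The matrix `ξ_v = [[0, v],[v*, 0]]` in block form. -/
def xi (n : ℕ) (v : Fin n → ℂ) : Matrix (Fin (n+1)) (Fin (n+1)) ℂ := xiP n v + xiM n v

/-- The derived representation of `gl(n+1, ℂ)` on `W = S^m(ℂ^{n+1})`, realized on
the polynomial ring `ℂ[x_1, …, x_{n+1}]` (a vector `v` corresponds to the linear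
form `Σ v_i x_i` and the symmetric product to the product of polynomials, so that
`(u+w)^j = Σ binom(j,i) u^i w^{j-i}`); it acts by derivations. -/
def rho (n : ℕ) (M : Matrix (Fin (n+1)) (Fin (n+1)) ℂ) :
    MvPolynomial (Fin (n+1)) ℂ →ₗ[ℂ] MvPolynomial (Fin (n+1)) ℂ :=
  ∑ i, ∑ j, M j i • ((LinearMap.mulLeft ℂ (X j)) ∘ₗ (pderiv i).toLinearMap)

/-- The component `W_k = S^k(V_1)·e_{n+1}^{m-k}` of `W = S^m(ℂ^{n+1})`: the span of
monomials of total degree `m` with degree `m - k` in the last variable. -/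
def Wcomp (n m k : ℕ) : Submodule ℂ (MvPolynomial (Fin (n+1)) ℂ) :=
  Submodule.span ℂ {p | ∃ d : Fin (n+1) →₀ ℕ,
    (∑ i, d i) = m ∧ d (Fin.last n) = m - k ∧ p = monomial d 1}

theorem Finsupp.eq_single_of_degree_eq_apply {σ : Type*} {d : σ →₀ ℕ} {i : σ}
    (h : d.degree = d i) : d = Finsupp.single i (d i) := by
  have hsplit := congrArg Finsupp.degree (Finsupp.single_add_erase i d)
  rw [map_add, Finsupp.degree_single, h, add_eq_left, Finsupp.degree_eq_zero_iff] at hsplit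
  rw [← Finsupp.single_add_erase i d, hsplit, add_zero, Finsupp.single_eq_same]

namespace MvPolynomial

variable {σ R : Type*}

theorem coeff_X_mul_pderiv [CommSemiring R] (i : σ) (d : σ →₀ ℕ) (p : MvPolynomial σ R) :
    coeff d (X i * pderiv i p) = d i * coeff d p := by
  classical
  induction p using MvPolynomial.induction_on' with
  | monomial s a =>
    rw [X_mul_pderiv_monomial, coeff_smul, coeff_monomial]
    split_ifs with h
    · simp [h, nsmul_eq_mul]
    · simp
  | add p q hp hq => simp only [map_add, mul_add, coeff_add, hp, hq]

theorem eq_zero_of_X_mul_monomial_eq [CommSemiring R] {i j : σ} (hij : i ≠ j) {s : σ →₀ ℕ}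
    {a b : R} (h : X i * monomial s a = X j * monomial s b) : a = 0 := by
  rw [X, X, monomial_mul, monomial_mul, monomial_eq_monomial_iff] at h
  rcases h with ⟨hs, -⟩ | ⟨ha, -⟩
  · rw [add_comm, add_comm (Finsupp.single j 1), add_right_inj,
      Finsupp.single_left_inj one_ne_zero] at hs
    exact absurd hs hij
  · rwa [one_mul] at ha

theorem IsHomogeneous.eq_monomial_of_X_mul_pderiv_eq [CommRing R] [IsDomain R] [CharZero R]
    {p : MvPolynomial σ R} {m : ℕ} (hp : p.IsHomogeneous m) {i : σ}
    (h : X i * pderiv i p = m • p) :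
    p = monomial (Finsupp.single i m) (coeff (Finsupp.single i m) p) := by
  classical
  ext d
  rw [coeff_monomial]
  split_ifs with hd
  · rw [hd]
  by_contra hne
  have hdi : d i = m := by
    have hcoeff := congrArg (coeff d) h
    rw [coeff_X_mul_pderiv, coeff_smul, nsmul_eq_mul] at hcoeff
    exact_mod_cast mul_right_cancel₀ hne hcoeff
  have hdeg : d.degree = d i := by
    rw [hdi]
    by_contra hdeg
    exact hne (hp.coeff_eq_zero hdeg)
  exact hd (by rw [Finsupp.eq_single_of_degree_eq_apply hdeg, hdi])

theorem C_I_mul_C_I : (C Complex.I : MvPolynomial σ ℂ) * C Complex.I = -1 := by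
  rw [← C_mul, Complex.I_mul_I, map_neg, map_one]

end MvPolynomial

namespace EichlerShimura

variable {n : ℕ}

def linForm (v : Fin n → ℂ) : MvPolynomial (Fin (n+1)) ℂ :=
  ∑ j, C (v j) * X j.castSucc

def conjDeriv (v : Fin n → ℂ) : MvPolynomial (Fin (n+1)) ℂ →ₗ[ℂ] MvPolynomial (Fin (n+1)) ℂ :=
  ∑ j, starRingEnd ℂ (v j) • (pderiv j.castSucc).toLinearMap

def IsRhoSymmetric (α : (Fin n → ℂ) → MvPolynomial (Fin (n+1)) ℂ) : Prop :=
  ∀ u v, rho n (xi n u) (α v) = rho n (xi n v) (α u)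

def IsTraceFree (α : (Fin n → ℂ) → MvPolynomial (Fin (n+1)) ℂ) : Prop :=
  ∑ j : Fin n, (rho n (xi n (Pi.single j 1)) (α (Pi.single j 1))
    + rho n (xi n (Pi.single j Complex.I)) (α (Pi.single j Complex.I))) = 0

def linPart (α : (Fin n → ℂ) → MvPolynomial (Fin (n+1)) ℂ) (v : Fin n → ℂ) :
    MvPolynomial (Fin (n+1)) ℂ :=
  α v - C Complex.I * α (Complex.I • v)

def antilinPart (α : (Fin n → ℂ) → MvPolynomial (Fin (n+1)) ℂ) (v : Fin n → ℂ) :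
    MvPolynomial (Fin (n+1)) ℂ :=
  α v + C Complex.I * α (Complex.I • v)

lemma xi_castSucc_castSucc (v : Fin n → ℂ) (i j : Fin n) :
    xi n v i.castSucc j.castSucc = 0 := by
  simp [xi, xiP, xiM]

lemma xi_castSucc_last (v : Fin n → ℂ) (i : Fin n) :
    xi n v i.castSucc (Fin.last n) = v i := by
  simp [xi, xiP, xiM, Fin.ext_iff]

lemma xi_last_castSucc (v : Fin n → ℂ) (j : Fin n) :
    xi n v (Fin.last n) j.castSucc = starRingEnd ℂ (v j) := by
  simp [xi, xiP, xiM, Fin.ext_iff]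

lemma xi_last_last (v : Fin n → ℂ) : xi n v (Fin.last n) (Fin.last n) = 0 := by
  simp [xi, xiP, xiM]

lemma rho_xi_apply (v : Fin n → ℂ) (p : MvPolynomial (Fin (n+1)) ℂ) :
    rho n (xi n v) p =
      linForm v * pderiv (Fin.last n) p + X (Fin.last n) * conjDeriv v p := by
  simp only [rho, linForm, conjDeriv, LinearMap.coe_sum, Finset.sum_apply, LinearMap.smul_apply,
    LinearMap.comp_apply, LinearMap.mulLeft_apply, Derivation.coeFn_coe]
  simp only [Fin.sum_univ_castSucc, xi_castSucc_castSucc, xi_castSucc_last, xi_last_castSucc,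
    xi_last_last, zero_smul, Finset.sum_const_zero, zero_add, add_zero, Finset.sum_mul,
    Finset.mul_sum]
  refine (add_comm _ _).trans (congrArg₂ (· + ·) ?_ ?_) <;>
    refine Finset.sum_congr rfl fun j _ => ?_ <;> simp only [smul_eq_C_mul] <;> ring

lemma linForm_smul (c : ℂ) (v : Fin n → ℂ) : linForm (c • v) = C c * linForm v := by
  simp only [linForm, Finset.mul_sum, Pi.smul_apply, smul_eq_mul, map_mul, mul_assoc]

lemma conjDeriv_smul (c : ℂ) (v : Fin n → ℂ) (p : MvPolynomial (Fin (n+1)) ℂ) :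
    conjDeriv (c • v) p = C (starRingEnd ℂ c) * conjDeriv v p := by
  simp only [conjDeriv, LinearMap.coe_sum, Finset.sum_apply, LinearMap.smul_apply,
    Pi.smul_apply, smul_eq_mul, map_mul, mul_smul, Finset.mul_sum, ← smul_eq_C_mul]

lemma conjDeriv_C_mul (v : Fin n → ℂ) (c : ℂ) (p : MvPolynomial (Fin (n+1)) ℂ) :
    conjDeriv v (C c * p) = C c * conjDeriv v p := by
  rw [← smul_eq_C_mul, map_smul, smul_eq_C_mul]

lemma linForm_single (j : Fin n) : linForm (Pi.single j 1) = X j.castSucc := by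
  rw [linForm, Finset.sum_eq_single j (fun k _ hk => by simp [hk]) (by simp)]
  simp

lemma conjDeriv_single (j : Fin n) (p : MvPolynomial (Fin (n+1)) ℂ) :
    conjDeriv (Pi.single j 1) p = pderiv j.castSucc p := by
  rw [conjDeriv, LinearMap.coe_sum, Finset.sum_apply,
    Finset.sum_eq_single j (fun k _ hk => by simp [hk]) (by simp)]
  simp

section Cocycle

variable {m : ℕ} {α : (Fin n → ℂ) → MvPolynomial (Fin (n+1)) ℂ}

lemma IsRhoSymmetric.expand (hsym : IsRhoSymmetric α) (u v : Fin n → ℂ) :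
    linForm u * pderiv (Fin.last n) (α v) + X (Fin.last n) * conjDeriv u (α v) =
      linForm v * pderiv (Fin.last n) (α u) + X (Fin.last n) * conjDeriv v (α u) := by
  rw [← rho_xi_apply, ← rho_xi_apply, hsym]

lemma IsRhoSymmetric.linPart_antilinPart (hsym : IsRhoSymmetric α) (u v : Fin n → ℂ) :
    linForm u * pderiv (Fin.last n) (linPart α v) =
        linForm v * pderiv (Fin.last n) (linPart α u) ∧
      X (Fin.last n) * conjDeriv u (linPart α v) =
        linForm v * pderiv (Fin.last n) (antilinPart α u) := by
  have h1 := hsym.expand u v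
  have h2 := hsym.expand u (Complex.I • v)
  have h3 := hsym.expand (Complex.I • u) v
  have h4 := hsym.expand (Complex.I • u) (Complex.I • v)
  simp only [linForm_smul, conjDeriv_smul, Complex.conj_I, map_neg] at h2 h3 h4
  simp only [linPart, antilinPart, map_sub, map_add, pderiv_C_mul, conjDeriv_C_mul]
  have hI : (C Complex.I : MvPolynomial (Fin (n+1)) ℂ) * C Complex.I = -1 := C_I_mul_C_I
  constructor <;> apply mul_left_cancel₀ (two_ne_zero (α := MvPolynomial (Fin (n+1)) ℂ))
  · linear_combination h1 - C Complex.I * h2 - C Complex.I * h3 - h4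
      + (linForm u * pderiv (Fin.last n) (α v) - X (Fin.last n) * conjDeriv u (α v)
        - linForm v * pderiv (Fin.last n) (α u) + X (Fin.last n) * conjDeriv v (α u)) * hI
  · linear_combination h1 - C Complex.I * h2 + C Complex.I * h3 + h4
      + (- linForm u * pderiv (Fin.last n) (α v) + X (Fin.last n) * conjDeriv u (α v)
        - linForm v * pderiv (Fin.last n) (α u) + X (Fin.last n) * conjDeriv v (α u)) * hI

lemma sum_X_mul_pderiv_antilinPart (hsym : IsRhoSymmetric α) (htr : IsTraceFree α) :
    ∑ j : Fin n, X j.castSucc * pderiv (Fin.last n) (antilinPart α (Pi.single j 1)) = 0 := by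
  have hterm : ∀ j : Fin n,
      rho n (xi n (Pi.single j 1)) (α (Pi.single j 1))
          + rho n (xi n (Pi.single j Complex.I)) (α (Pi.single j Complex.I)) =
        2 * (X j.castSucc * pderiv (Fin.last n) (antilinPart α (Pi.single j 1))) := by
    intro j
    have hdiag := (hsym.linPart_antilinPart (Pi.single j 1) (Pi.single j 1)).2
    have hsingle : (Pi.single j Complex.I : Fin n → ℂ) = Complex.I • Pi.single j 1 := by
      rw [← Pi.single_smul, smul_eq_mul, mul_one]
    rw [hsingle]
    simp only [rho_xi_apply, linForm_smul, conjDeriv_smul, Complex.conj_I, map_neg,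
      linForm_single, conjDeriv_single, linPart, antilinPart, map_sub, map_add,
      pderiv_C_mul] at hdiag ⊢
    linear_combination hdiag
  rw [IsTraceFree, Finset.sum_congr rfl fun j _ => hterm j, ← Finset.mul_sum] at htr
  exact (mul_eq_zero.mp htr).resolve_left two_ne_zero

lemma isHomogeneous_linPart (hW : ∀ v, (α v).IsHomogeneous m) (v : Fin n → ℂ) :
    (linPart α v).IsHomogeneous m :=
  (hW v).sub ((hW _).C_mul _)

lemma X_last_mul_pderiv_linPart (hW : ∀ v, (α v).IsHomogeneous m)
    (hsym : IsRhoSymmetric α) (htr : IsTraceFree α) (v : Fin n → ℂ) :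
    X (Fin.last n) * pderiv (Fin.last n) (linPart α v) = m • linPart α v := by
  have heuler := (isHomogeneous_linPart hW v).sum_X_mul_pderiv
  rw [Fin.sum_univ_castSucc] at heuler
  have hfirst :
      X (Fin.last n) * ∑ j : Fin n, X j.castSucc * pderiv j.castSucc (linPart α v) = 0 :=
    calc _ = linForm v * ∑ j : Fin n,
          X j.castSucc * pderiv (Fin.last n) (antilinPart α (Pi.single j 1)) := by
          simp only [Finset.mul_sum]
          refine Finset.sum_congr rfl fun j _ => ?_
          rw [mul_left_comm, ← conjDeriv_single, (hsym.linPart_antilinPart (Pi.single j 1) v).2]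
          ring
      _ = 0 := by rw [sum_X_mul_pderiv_antilinPart hsym htr, mul_zero]
  apply mul_left_cancel₀ (X_ne_zero (Fin.last n))
  linear_combination X (Fin.last n) * heuler - hfirst

lemma linForm_mul_linPart_comm (hm : m ≠ 0) (hW : ∀ v, (α v).IsHomogeneous m)
    (hsym : IsRhoSymmetric α) (htr : IsTraceFree α) (u v : Fin n → ℂ) :
    linForm u * linPart α v = linForm v * linPart α u := by
  have hu := X_last_mul_pderiv_linPart hW hsym htr u
  have hv := X_last_mul_pderiv_linPart hW hsym htr v
  rw [nsmul_eq_mul] at hu hv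
  apply mul_left_cancel₀ (Nat.cast_ne_zero.mpr hm : (m : MvPolynomial (Fin (n+1)) ℂ) ≠ 0)
  linear_combination X (Fin.last n) * (hsym.linPart_antilinPart u v).1
    - linForm u * hv + linForm v * hu

lemma linPart_single_eq_zero (hn : 1 < n) (hm : m ≠ 0) (hW : ∀ v, (α v).IsHomogeneous m)
    (hsym : IsRhoSymmetric α) (htr : IsTraceFree α) (i : Fin n) :
    linPart α (Pi.single i 1) = 0 := by
  have : Nontrivial (Fin n) := Fin.nontrivial_iff_two_le.mpr hn
  obtain ⟨j, hji⟩ := exists_ne i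
  have hmon (k : Fin n) : linPart α (Pi.single k 1) = monomial (Finsupp.single (Fin.last n) m)
      (coeff (Finsupp.single (Fin.last n) m) (linPart α (Pi.single k 1))) :=
    (isHomogeneous_linPart hW _).eq_monomial_of_X_mul_pderiv_eq
      (X_last_mul_pderiv_linPart hW hsym htr _)
  have h := linForm_mul_linPart_comm hm hW hsym htr (Pi.single j 1) (Pi.single i 1)
  rw [linForm_single, linForm_single, hmon i, hmon j] at h
  rw [hmon i, eq_zero_of_X_mul_monomial_eq ((Fin.castSucc_injective n).ne hji) h, monomial_zero]

lemma linPart_eq_zero (hn : 1 < n) (hm : m ≠ 0) (hW : ∀ v, (α v).IsHomogeneous m)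
    (hsym : IsRhoSymmetric α) (htr : IsTraceFree α) (v : Fin n → ℂ) :
    linPart α v = 0 := by
  have h := linForm_mul_linPart_comm hm hW hsym htr (Pi.single ⟨0, by omega⟩ 1) v
  rw [linPart_single_eq_zero hn hm hW hsym htr, mul_zero, linForm_single] at h
  exact (mul_eq_zero.mp h).resolve_left (X_ne_zero _)

lemma pderiv_last_eq_zero (hn : 1 < n) (hm : m ≠ 0) (hW : ∀ v, (α v).IsHomogeneous m)
    (hsym : IsRhoSymmetric α) (htr : IsTraceFree α) (v : Fin n → ℂ) :
    pderiv (Fin.last n) (α v) = 0 := by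
  have hanti : pderiv (Fin.last n) (antilinPart α v) = 0 := by
    have h := (hsym.linPart_antilinPart v (Pi.single ⟨0, by omega⟩ 1)).2
    rw [linPart_single_eq_zero hn hm hW hsym htr, map_zero, mul_zero, linForm_single,
      zero_eq_mul] at h
    exact h.resolve_left (X_ne_zero _)
  have hlin : pderiv (Fin.last n) (linPart α v) = 0 := by
    rw [linPart_eq_zero hn hm hW hsym htr, map_zero]
  have htwo : 2 * pderiv (Fin.last n) (α v) = 0 := by
    simp only [linPart, antilinPart, map_sub, map_add, pderiv_C_mul] at hlin hanti
    linear_combination hlin + hanti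
  exact (mul_eq_zero.mp htwo).resolve_left two_ne_zero

end Cocycle

lemma apply_I_smul_of_linPart_eq_zero {α : (Fin n → ℂ) → MvPolynomial (Fin (n+1)) ℂ}
    {v : Fin n → ℂ} (h : linPart α v = 0) : α (Complex.I • v) = (-Complex.I) • α v := by
  rw [linPart, sub_eq_zero] at h
  rw [smul_eq_C_mul, h, map_neg]
  linear_combination α (Complex.I • v) * C_I_mul_C_I (σ := Fin (n+1))

lemma mem_Wcomp_of_pderiv_last_eq_zero {m : ℕ} {p : MvPolynomial (Fin (n+1)) ℂ}
    (hp : p.IsHomogeneous m) (h : pderiv (Fin.last n) p = 0) : p ∈ Wcomp n m m := by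
  rw [p.as_sum]
  refine Submodule.sum_mem _ fun d hd => ?_
  have hcoeff : coeff d p ≠ 0 := mem_support_iff.mp hd
  have hlast : d (Fin.last n) = 0 := by
    have h' := coeff_X_mul_pderiv (Fin.last n) d p
    rw [h, mul_zero, coeff_zero, zero_eq_mul] at h'
    exact_mod_cast h'.resolve_right hcoeff
  have hdeg : ∑ i, d i = m := by
    rw [← Finsupp.degree_eq_sum]
    by_contra hdeg
    exact hcoeff (hp.coeff_eq_zero hdeg)
  rw [← mul_one (coeff d p), ← smul_eq_mul, ← smul_monomial]
  exact Submodule.smul_mem _ _ (Submodule.subset_span ⟨d, hdeg, by rw [Nat.sub_self, hlast], rfl⟩)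

end EichlerShimura

theorem eichler_shimura_harmonic_general (n m : ℕ) (hn : 1 < n) (hm : 1 ≤ m)
    (α : (Fin n → ℂ) → MvPolynomial (Fin (n+1)) ℂ)
    (hW : ∀ v, α v ∈ homogeneousSubmodule (Fin (n+1)) ℂ m)
    (hsym : ∀ u v, rho n (xi n u) (α v) = rho n (xi n v) (α u))
    (htr : ∑ j : Fin n,
        (rho n (xi n (Pi.single j 1)) (α (Pi.single j 1))
          + rho n (xi n (Pi.single j Complex.I)) (α (Pi.single j Complex.I))) = 0) :
    (∀ v, α (Complex.I • v) = (-Complex.I) • α v) ∧ (∀ v, α v ∈ Wcomp n m m) := by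
  have hm0 : m ≠ 0 := Nat.one_le_iff_ne_zero.mp hm
  have hhom (v) : (α v).IsHomogeneous m := (mem_homogeneousSubmodule m _).mp (hW v)
  refine ⟨fun v => ?_, fun v => ?_⟩
  · exact EichlerShimura.apply_I_smul_of_linPart_eq_zero
      (EichlerShimura.linPart_eq_zero hn hm0 hhom hsym htr v)
  · exact EichlerShimura.mem_Wcomp_of_pderiv_last_eq_zero (hhom v)
      (EichlerShimura.pderiv_last_eq_zero hn hm0 hhom hsym htr v)

/-- If `α : 𝔭 → W = S^m(ℂ^{n+1})` is ℝ-linear, symmetric (`ρ_m(ξ_u)α(ξ_v) =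
ρ_m(ξ_v)α(ξ_u)`) and trace free, then `α` is conjugate-ℂ-linear and takes values
in the top component `W_m = S^m(V_1)`. -/
theorem eichler_shimura_harmonic (n m : ℕ) (hn : 1 < n) (hm : 1 ≤ m)
    (α : (Fin n → ℂ) → MvPolynomial (Fin (n+1)) ℂ)
    (hW : ∀ v, α v ∈ homogeneousSubmodule (Fin (n+1)) ℂ m)
    (hadd : ∀ u v, α (u + v) = α u + α v)
    (hsmul : ∀ (r : ℝ) (v : Fin n → ℂ), α ((r : ℂ) • v) = (r : ℂ) • α v)
    (hsym : ∀ u v, rho n (xi n u) (α v) = rho n (xi n v) (α u))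
    (htr : ∑ j : Fin n,
        (rho n (xi n (Pi.single j 1)) (α (Pi.single j 1))
          + rho n (xi n (Pi.single j Complex.I)) (α (Pi.single j Complex.I))) = 0) :
    (∀ v, α (Complex.I • v) = (-Complex.I) • α v) ∧ (∀ v, α v ∈ Wcomp n m m) :=
  eichler_shimura_harmonic_general n m hn hm α hW hsym htr

end
end

section
/- Let n > 1 and m ≥ 1. Suppose α : 𝔭 → W' = S^m(V)' is an ℝ-linear map satisfying (i) ρ_m'(ξ_u)α(ξ_v) = ρ_m'(ξ_v)α(ξ_u) for all u, v ∈ ℂⁿ, and (ii) Σ_{j=1}^n ( ρ_m'(ξ_{e_j})α(ξ_{e_j}) + ρ_m'(ξ_{i e_j})α(ξ_{i e_j}) ) = 0. Then α is ℂ-linear, i.e. α(ξ_{iv}) = i·α(ξ_v) for all v ∈ ℂⁿ, α takes values in S^m(V_1') (the symmetric m-linear forms vanishing whenever some argument equals e_{n+1}), and the (m+1)-linear form (u, v_1, …, v_m) ↦ α(ξ_u)(v_1, …, v_m) on V_1 is symmetric in all m+1 variables. -/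
/-!
Split the ℝ-linear map `α` as `P + Q` with `P` ℂ-linear and `Q` conjugate-linear. Since
`u ↦ ρ'(ξ_u)` splits in the same way as `ρ'(ξ⁺_u) + ρ'(ξ⁻_u)`, condition (i) separates by type into
`ρ'(ξ⁺_u)P(v) = ρ'(ξ⁺_v)P(u)`, `ρ'(ξ⁺_u)Q(v) = ρ'(ξ⁻_v)P(u)` and `ρ'(ξ⁻_u)Q(v) = ρ'(ξ⁻_v)Q(u)`,
and (ii) becomes `Σ_j ρ'(ξ⁻_{e_j})P(e_j) = 0`.

Evaluate on tuples whose entries are each `e_{n+1}` or in `V_1`; they contain the standard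
basis, so forms vanishing on them vanish. On such a tuple `ρ'(ξ⁺_u)` replaces an entry `e_{n+1}`
by `u`, `ρ'(ξ⁻_u)` replaces an entry `w ∈ V_1` by `⟨u, w⟩ e_{n+1}`, and by symmetry all
replacements of equal entries give the same value. The first identity becomes the exchange law
`P(v)(…, u, …) = P(u)(…, v, …)` at a slot holding `e_{n+1}`, and with it the trace identity
forces `P(v)` to vanish as soon as one argument is `e_{n+1}`. The second identity then kills `Q`
off `(e_{n+1}, …, e_{n+1})`, and the third kills it there, using two orthogonal vectors of `ℂⁿ`.
So `α = P` is ℂ-linear, and the exchange law gives the full symmetry.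
-/

open MvPolynomial

noncomputable section

/-- The dual representation `ρ'(X)φ = -φ ∘ ρ(X)` on `m`-linear forms on `ℂ^{n+1}`. -/
def rhoDual (n m : ℕ) (M : Matrix (Fin (n+1)) (Fin (n+1)) ℂ)
    (φ : MultilinearMap ℂ (fun _ : Fin m => (Fin (n+1) → ℂ)) ℂ) :
    MultilinearMap ℂ (fun _ : Fin m => (Fin (n+1) → ℂ)) ℂ :=
  - ∑ i : Fin m, φ.compLinearMap
      (Function.update (fun _ => (LinearMap.id : (Fin (n+1) → ℂ) →ₗ[ℂ] (Fin (n+1) → ℂ)))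
        i (Matrix.toLin' M))

open Complex
open scoped Matrix

section ComplexParts

variable {U E F : Type*} [AddCommGroup U] [Module ℂ U] [AddCommGroup E] [Module ℂ E]
  [AddCommGroup F] [Module ℂ F]

namespace LinearMap

lemma map_complex_smul_of_real (f : U →ₗ[ℝ] E) (c : ℂ) (u : U) :
    f (c • u) = (c.re : ℂ) • f u + (c.im : ℂ) • f (I • u) := by
  conv_lhs => rw [← Complex.re_add_im c, add_smul, mul_smul]
  simp only [map_add, Complex.coe_smul, map_smul]

lemma map_I_smul_I_smul (f : U →ₗ[ℝ] E) (u : U) : f (I • I • u) = - f u := by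
  rw [smul_smul, I_mul_I, neg_one_smul, map_neg]

def complexLinearPart (f : U →ₗ[ℝ] E) : U →ₗ[ℂ] E where
  toFun u := (2⁻¹ : ℂ) • (f u - I • f (I • u))
  map_add' u v := by simp only [smul_add, map_add]; module
  map_smul' c u := by
    rw [RingHom.id_apply, smul_comm I c u, f.map_complex_smul_of_real c u,
      f.map_complex_smul_of_real c (I • u), f.map_I_smul_I_smul]
    conv_rhs => rw [← Complex.re_add_im c]
    match_scalars
    · ring
    · linear_combination (c.im / 2 : ℂ) * I_sq

def conjLinearPart (f : U →ₗ[ℝ] E) : U →ₗ⋆[ℂ] E where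
  toFun u := (2⁻¹ : ℂ) • (f u + I • f (I • u))
  map_add' u v := by simp only [smul_add, map_add]; module
  map_smul' c u := by
    rw [starRingEnd_apply, smul_comm I c u, f.map_complex_smul_of_real c u,
      f.map_complex_smul_of_real c (I • u), f.map_I_smul_I_smul]
    conv_rhs => rw [← Complex.re_add_im c]
    simp only [star_add, star_mul', Complex.star_def, conj_ofReal, conj_I]
    match_scalars
    · ring
    · linear_combination (c.im / 2 : ℂ) * I_sq

lemma complexLinearPart_apply (f : U →ₗ[ℝ] E) (u : U) :
    f.complexLinearPart u = (2⁻¹ : ℂ) • (f u - I • f (I • u)) := rfl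

lemma conjLinearPart_apply (f : U →ₗ[ℝ] E) (u : U) :
    f.conjLinearPart u = (2⁻¹ : ℂ) • (f u + I • f (I • u)) := rfl

lemma complexLinearPart_add_conjLinearPart (f : U →ₗ[ℝ] E) (u : U) :
    f.complexLinearPart u + f.conjLinearPart u = f u := by
  rw [complexLinearPart_apply, conjLinearPart_apply]
  module

variable (A : U →ₗ[ℂ] E →ₗ[ℂ] F) (B : U →ₗ⋆[ℂ] E →ₗ[ℂ] F) (P : U →ₗ[ℂ] E) (Q : U →ₗ⋆[ℂ] E)

/-- The four terms of `(A u + B u) (P v + Q v)` have distinct (anti)linearity types in `(u, v)`,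
so the identity at `(u, v)`, `(I • u, v)`, `(u, I • v)`, `(I • u, I • v)` separates them. -/
lemma comm_components_of_add_apply_add_comm
    (h : ∀ u v, (A u + B u) (P v + Q v) = (A v + B v) (P u + Q u)) (u v : U) :
    A u (P v) = A v (P u) ∧ A u (Q v) = B v (P u) ∧ B u (Q v) = B v (Q u) := by
  have h₁ := h u v
  have h₂ := h (I • u) v
  have h₃ := h u (I • v)
  have h₄ := h (I • u) (I • v)
  simp only [map_smul, map_smulₛₗ, add_apply, smul_apply, map_add, conj_I] at h₁ h₂ h₃ h₄
  refine ⟨?_, ?_, ?_⟩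
  · linear_combination (norm := match_scalars <;> (ring_nf; simp only [I_sq]; ring))
      (4:ℂ)⁻¹ • (h₁ - I • h₂ - I • h₃ - h₄)
  · linear_combination (norm := match_scalars <;> (ring_nf; simp only [I_sq]; ring))
      (4:ℂ)⁻¹ • (h₁ - I • h₂ + I • h₃ + h₄)
  · linear_combination (norm := match_scalars <;> (ring_nf; simp only [I_sq]; ring))
      (4:ℂ)⁻¹ • (h₁ + I • h₂ + I • h₃ - h₄)

lemma add_apply_add_add_I_smul (u : U) :
    (A u + B u) (P u + Q u) + (A (I • u) + B (I • u)) (P (I • u) + Q (I • u))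
      = (2 : ℂ) • (A u (Q u) + B u (P u)) := by
  simp only [map_smul, map_smulₛₗ, add_apply, smul_apply, map_add, conj_I]
  match_scalars <;> (ring_nf; simp only [I_sq]; ring)

end LinearMap

end ComplexParts

lemma MultilinearMap.compLinearMap_update_id_apply {R ι M N : Type*} [CommSemiring R]
    [DecidableEq ι] [AddCommMonoid M] [Module R M] [AddCommMonoid N] [Module R N]
    (φ : MultilinearMap R (fun _ : ι => M) N) (i : ι) (g : M →ₗ[R] M) (x : ι → M) :
    φ.compLinearMap (Function.update (fun _ => LinearMap.id) i g) x
      = φ (Function.update x i (g (x i))) := by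
  rw [MultilinearMap.compLinearMap_apply]
  congr 1
  funext j
  rcases eq_or_ne j i with rfl | hji
  · simp
  · simp [Function.update_of_ne hji]

lemma MultilinearMap.apply_update_eq_of_comp_perm {R ι M N : Type*} [CommSemiring R]
    [DecidableEq ι] [AddCommMonoid M] [Module R M] [AddCommMonoid N] [Module R N]
    {φ : MultilinearMap R (fun _ : ι => M) N} (hφ : ∀ (σ : Equiv.Perm ι) x, φ (x ∘ σ) = φ x)
    {x : ι → M} {i k : ι} (h : x i = x k) (y : M) :
    φ (Function.update x i y) = φ (Function.update x k y) := by
  rw [← hφ (Equiv.swap i k)]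
  congr 1
  funext j
  simp only [Function.comp_apply, Function.update_apply, Equiv.swap_apply_def]
  split_ifs <;> simp_all

lemma Equiv.Perm.comp_eq_of_comp_swap_eq {ι X Y : Type*} [Finite ι] [DecidableEq ι]
    {F : (ι → X) → Y} (h : ∀ a b y, F (y ∘ Equiv.swap a b) = F y) (σ : Equiv.Perm ι)
    (y : ι → X) : F (y ∘ σ) = F y := by
  induction σ using Equiv.Perm.swap_induction_on generalizing y with
  | one => rfl
  | swap_mul f a b _ ih => rw [Equiv.Perm.coe_mul, ← Function.comp_assoc, ih, h]

namespace EichlerShimura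

abbrev Form (n m : ℕ) := MultilinearMap ℂ (fun _ : Fin m => Fin (n+1) → ℂ) ℂ

lemma rhoDual_apply {n m : ℕ} (M : Matrix (Fin (n+1)) (Fin (n+1)) ℂ) (φ : Form n m)
    (x : Fin m → Fin (n+1) → ℂ) :
    rhoDual n m M φ x = -∑ i, φ (Function.update x i (M *ᵥ x i)) := by
  simp only [rhoDual, neg_apply, sum_apply, MultilinearMap.compLinearMap_update_id_apply,
    Matrix.toLin'_apply]

def rhoDualₗ (n m : ℕ) : Matrix (Fin (n+1)) (Fin (n+1)) ℂ →ₗ[ℂ] Form n m →ₗ[ℂ] Form n m :=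
  LinearMap.mk₂ ℂ (rhoDual n m)
    (fun M N φ => MultilinearMap.ext fun x => by
      simp only [rhoDual_apply, Matrix.add_mulVec, MultilinearMap.map_update_add,
        Finset.sum_add_distrib, neg_add, add_apply])
    (fun c M φ => MultilinearMap.ext fun x => by
      simp [rhoDual_apply, Matrix.smul_mulVec, Finset.mul_sum])
    (fun M φ ψ => MultilinearMap.ext fun x => by
      simp only [rhoDual_apply, add_apply, Finset.sum_add_distrib, neg_add])
    (fun c M φ => MultilinearMap.ext fun x => by simp [rhoDual_apply, Finset.mul_sum])

def xiPₗ (n : ℕ) : (Fin n → ℂ) →ₗ[ℂ] Matrix (Fin (n+1)) (Fin (n+1)) ℂ where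
  toFun := xiP n
  map_add' u v := by
    ext i j; simp only [xiP, Matrix.of_apply, Matrix.add_apply]; split_ifs <;> simp
  map_smul' c u := by
    ext i j; simp only [xiP, Matrix.of_apply, Matrix.smul_apply]; split_ifs <;> simp

def xiMₗ (n : ℕ) : (Fin n → ℂ) →ₗ⋆[ℂ] Matrix (Fin (n+1)) (Fin (n+1)) ℂ where
  toFun := xiM n
  map_add' u v := by
    ext i j; simp only [xiM, Matrix.of_apply, Matrix.add_apply]; split_ifs <;> simp
  map_smul' c u := by
    ext i j; simp only [xiM, Matrix.of_apply, Matrix.smul_apply]; split_ifs <;> simp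

def rhoDualXiP (n m : ℕ) : (Fin n → ℂ) →ₗ[ℂ] Form n m →ₗ[ℂ] Form n m :=
  (rhoDualₗ n m).comp (xiPₗ n)

def rhoDualXiM (n m : ℕ) : (Fin n → ℂ) →ₗ⋆[ℂ] Form n m →ₗ[ℂ] Form n m :=
  (rhoDualₗ n m).comp (xiMₗ n)

variable {n m : ℕ}

lemma xiP_mulVec (u : Fin n → ℂ) (x : Fin (n+1) → ℂ) :
    xiP n u *ᵥ x = x (Fin.last n) • (Fin.snoc u 0 : Fin (n+1) → ℂ) := by
  funext i
  refine Fin.lastCases ?_ (fun k => ?_) i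
  · simp [xiP, Matrix.mulVec, dotProduct]
  · simp [xiP, Matrix.mulVec, dotProduct, mul_comm]

lemma xiM_mulVec (u : Fin n → ℂ) (x : Fin (n+1) → ℂ) :
    xiM n u *ᵥ x = (star u ⬝ᵥ Fin.init x) • Pi.single (Fin.last n) 1 := by
  funext i
  refine Fin.lastCases ?_ (fun k => ?_) i
  · simp [xiM, Matrix.mulVec, dotProduct, Fin.sum_univ_castSucc, Fin.init]
  · simp [xiM, Matrix.mulVec, dotProduct]

lemma rhoDual_xi (u : Fin n → ℂ) (φ : Form n m) :
    rhoDual n m (xi n u) φ = (rhoDualXiP n m u + rhoDualXiM n m u) φ := by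
  change rhoDualₗ n m (xiP n u + xiM n u) φ = _
  rw [map_add]
  rfl

lemma rhoDualXiP_apply (u : Fin n → ℂ) (φ : Form n m) (x : Fin m → Fin (n+1) → ℂ) :
    rhoDualXiP n m u φ x
      = -∑ i, x i (Fin.last n) • φ (Function.update x i (Fin.snoc u 0)) := by
  change rhoDual n m (xiP n u) φ x = _
  simp only [rhoDual_apply, xiP_mulVec, MultilinearMap.map_update_smul]

lemma rhoDualXiM_apply (u : Fin n → ℂ) (φ : Form n m) (x : Fin m → Fin (n+1) → ℂ) :
    rhoDualXiM n m u φ x = -∑ i, (star u ⬝ᵥ Fin.init (x i))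
      • φ (Function.update x i (Pi.single (Fin.last n) 1)) := by
  change rhoDual n m (xiM n u) φ x = _
  simp only [rhoDual_apply, xiM_mulVec, MultilinearMap.map_update_smul]

lemma init_single_last : Fin.init (Pi.single (Fin.last n) 1 : Fin (n+1) → ℂ) = 0 := by
  ext j; simp [Fin.init]

lemma snoc_ne_single_last (w : Fin n → ℂ) :
    (Fin.snoc w 0 : Fin (n+1) → ℂ) ≠ Pi.single (Fin.last n) 1 :=
  fun h => by simpa using congrFun h (Fin.last n)

def IsGraded (x : Fin m → Fin (n+1) → ℂ) : Prop :=
  ∀ k, x k = Pi.single (Fin.last n) 1 ∨ x k (Fin.last n) = 0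

lemma isGraded_snoc (w : Fin m → Fin n → ℂ) :
    IsGraded fun k => (Fin.snoc (w k) 0 : Fin (n+1) → ℂ) :=
  fun _ => Or.inr (Fin.snoc_last _ _)

lemma IsGraded.update_single_last {x : Fin m → Fin (n+1) → ℂ} (hx : IsGraded x) (i : Fin m) :
    IsGraded (Function.update x i (Pi.single (Fin.last n) 1)) := by
  intro k
  rcases eq_or_ne k i with rfl | hki
  · simp
  · simpa [Function.update_of_ne hki] using hx k

lemma eq_zero_of_isGraded {φ : Form n m} (h : ∀ x, IsGraded x → φ x = 0) : φ = 0 := by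
  refine Module.Basis.ext_multilinear (fun _ => Pi.basisFun ℂ (Fin (n+1))) fun κ => ?_
  rw [h _ fun k => ?_, zero_apply]
  rw [Pi.basisFun_apply]
  by_cases hk : κ k = Fin.last n
  · exact Or.inl (by rw [hk])
  · exact Or.inr (Pi.single_eq_of_ne (Ne.symm hk) _)

lemma sum_last_smul_update_of_isGraded {φ : Form n m}
    (hφ : ∀ (σ : Equiv.Perm (Fin m)) x, φ (x ∘ σ) = φ x) {x : Fin m → Fin (n+1) → ℂ}
    (hx : IsGraded x) {i : Fin m} (hi : x i = Pi.single (Fin.last n) 1) (y : Fin (n+1) → ℂ) :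
    ∑ k, x k (Fin.last n) • φ (Function.update x k y)
      = ((Finset.univ.filter fun k => x k = Pi.single (Fin.last n) 1).card : ℂ)
          • φ (Function.update x i y) := by
  rw [Finset.natCast_card_filter, Finset.sum_smul]
  refine Finset.sum_congr rfl fun k _ => ?_
  rcases hx k with hk | hk
  · rw [if_pos hk, hk, Pi.single_eq_same, φ.apply_update_eq_of_comp_perm hφ (hk.trans hi.symm)]
  · have hne : x k ≠ Pi.single (Fin.last n) 1 := fun h => by simp [h] at hk
    rw [if_neg hne, hk, zero_smul, zero_smul]

section Relations

variable {P : (Fin n → ℂ) →ₗ[ℂ] Form n m} {Q : (Fin n → ℂ) →ₗ⋆[ℂ] Form n m}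

lemma apply_update_snoc_comm (hP : ∀ v (σ : Equiv.Perm (Fin m)) x, P v (x ∘ σ) = P v x)
    (hPP : ∀ u v, rhoDualXiP n m u (P v) = rhoDualXiP n m v (P u))
    {x : Fin m → Fin (n+1) → ℂ} (hx : IsGraded x) {i : Fin m}
    (hi : x i = Pi.single (Fin.last n) 1) (u v : Fin n → ℂ) :
    P v (Function.update x i (Fin.snoc u 0)) = P u (Function.update x i (Fin.snoc v 0)) := by
  have h := DFunLike.congr_fun (hPP u v) x
  simp only [rhoDualXiP_apply, neg_inj, sum_last_smul_update_of_isGraded (hP _) hx hi] at h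
  refine smul_right_injective _ ?_ h
  exact Nat.cast_ne_zero.2 (Finset.card_ne_zero.2 ⟨i, by simp [hi]⟩)

lemma sum_apply_init_update_single_last_eq_zero
    (hPtr : ∑ j, rhoDualXiM n m (Pi.single j 1) (P (Pi.single j 1)) = 0)
    (x : Fin m → Fin (n+1) → ℂ) :
    ∑ k, P (Fin.init (x k)) (Function.update x k (Pi.single (Fin.last n) 1)) = 0 := by
  have h := DFunLike.congr_fun hPtr x
  simp only [sum_apply, rhoDualXiM_apply, zero_apply, Finset.sum_neg_distrib, neg_eq_zero,
    Pi.star_single, star_one, single_dotProduct, one_mul] at h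
  rw [Finset.sum_comm] at h
  convert h using 2 with k
  conv_lhs => rw [pi_eq_sum_univ' (Fin.init (x k))]
  simp only [map_sum, map_smul, sum_apply, smul_apply, smul_eq_mul]

/-- Apply the trace identity to `x` with `v` in place of its entry `e_{n+1}` at `i`: by the
exchange law every term not killed by `Fin.init e_{n+1} = 0` equals `P v x`. -/
lemma apply_eq_zero_of_isGraded (hP : ∀ v (σ : Equiv.Perm (Fin m)) x, P v (x ∘ σ) = P v x)
    (hPP : ∀ u v, rhoDualXiP n m u (P v) = rhoDualXiP n m v (P u))
    (hPtr : ∑ j, rhoDualXiM n m (Pi.single j 1) (P (Pi.single j 1)) = 0)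
    {x : Fin m → Fin (n+1) → ℂ} (hx : IsGraded x) {i : Fin m}
    (hi : x i = Pi.single (Fin.last n) 1) (v : Fin n → ℂ) :
    P v x = 0 := by
  have hterm : ∀ k, P (Fin.init (Function.update x i (Fin.snoc v 0) k))
      (Function.update (Function.update x i (Fin.snoc v 0)) k (Pi.single (Fin.last n) 1))
      = if Function.update x i (Fin.snoc v 0) k = Pi.single (Fin.last n) 1 then 0 else P v x := by
    intro k
    split_ifs with hk
    · rw [hk, init_single_last, map_zero, zero_apply]
    rcases eq_or_ne k i with rfl | hki
    · rw [Function.update_idem, Function.update_self, Fin.init_snoc, ← hi,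
        Function.update_eq_self]
    rw [Function.update_of_ne hki] at hk ⊢
    have hxk : x k = Fin.snoc (Fin.init (x k)) 0 := by
      rcases hx k with h | h
      · exact absurd h hk
      · conv_lhs => rw [← Fin.snoc_init_self (x k), h]
    have hz : Function.update x k (Pi.single (Fin.last n) 1) i = Pi.single (Fin.last n) 1 := by
      rw [Function.update_of_ne hki.symm, hi]
    rw [Function.update_comm hki.symm,
      apply_update_snoc_comm hP hPP (hx.update_single_last k) hz, ← hxk,
      (P v).apply_update_eq_of_comp_perm (hP v) (hz.trans (Function.update_self k _ x).symm),
      Function.update_idem, Function.update_eq_self]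
  have h := sum_apply_init_update_single_last_eq_zero hPtr (Function.update x i (Fin.snoc v 0))
  simp only [hterm, Finset.sum_ite, Finset.sum_const_zero, zero_add, Finset.sum_const] at h
  refine (smul_eq_zero.1 h).resolve_left (Finset.card_ne_zero.2 ⟨i, ?_⟩)
  simpa using snoc_ne_single_last v

/-- Projecting slot `i` onto `ℂ e_{n+1}` gives a multilinear form that vanishes on graded tuples. -/
lemma apply_eq_zero_of_eq_single_last
    (hP : ∀ v (σ : Equiv.Perm (Fin m)) x, P v (x ∘ σ) = P v x)
    (hPP : ∀ u v, rhoDualXiP n m u (P v) = rhoDualXiP n m v (P u))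
    (hPtr : ∑ j, rhoDualXiM n m (Pi.single j 1) (P (Pi.single j 1)) = 0)
    {x : Fin m → Fin (n+1) → ℂ} {i : Fin m} (hi : x i = Pi.single (Fin.last n) 1)
    (v : Fin n → ℂ) :
    P v x = 0 := by
  have hψ : (P v).compLinearMap (Function.update (fun _ => LinearMap.id) i
      ((LinearMap.proj (Fin.last n)).smulRight (Pi.single (Fin.last n) 1))) = 0 :=
    eq_zero_of_isGraded fun z hz => by
      rw [MultilinearMap.compLinearMap_update_id_apply, LinearMap.smulRight_apply,
        MultilinearMap.map_update_smul,
        apply_eq_zero_of_isGraded hP hPP hPtr (hz.update_single_last i) (Function.update_self ..),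
        smul_zero]
  have h := DFunLike.congr_fun hψ x
  rwa [MultilinearMap.compLinearMap_update_id_apply, LinearMap.smulRight_apply,
    LinearMap.proj_apply, hi, Pi.single_eq_same, one_smul, ← hi, Function.update_eq_self,
    zero_apply] at h

lemma conj_apply_eq_zero_of_isGraded_of_ne
    (hQ : ∀ v (σ : Equiv.Perm (Fin m)) x, Q v (x ∘ σ) = Q v x)
    (hPQ : ∀ u v, rhoDualXiP n m u (Q v) = rhoDualXiM n m v (P u))
    (hP : ∀ v (x : Fin m → Fin (n+1) → ℂ) i, x i = Pi.single (Fin.last n) 1 → P v x = 0)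
    {x : Fin m → Fin (n+1) → ℂ} (hx : IsGraded x) {i : Fin m}
    (hi : x i ≠ Pi.single (Fin.last n) 1) (v : Fin n → ℂ) :
    Q v x = 0 := by
  set z := Function.update x i (Pi.single (Fin.last n) 1)
  have hxz : x = Function.update z i (Fin.snoc (Fin.init (x i)) 0) := by
    rw [Function.update_idem, ← (hx i).resolve_left hi, Fin.snoc_init_self,
      Function.update_eq_self]
  have h := DFunLike.congr_fun (hPQ (Fin.init (x i)) v) z
  rw [rhoDualXiP_apply, rhoDualXiM_apply,
    sum_last_smul_update_of_isGraded (hQ v) (hx.update_single_last i) (Function.update_self ..),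
    ← hxz, Finset.sum_eq_zero fun k _ => by rw [hP _ _ k (Function.update_self ..), smul_zero],
    neg_zero, neg_eq_zero] at h
  refine (smul_eq_zero.1 h).resolve_left (Nat.cast_ne_zero.2 (Finset.card_ne_zero.2 ⟨i, ?_⟩))
  simp

/-- `hQQ` at `(e_{n+1}, …, e_{n+1})` with one entry replaced by `z` reads
`⟨a, z⟩ Q b E = ⟨b, z⟩ Q a E`; this needs two orthogonal vectors, hence `1 < n`. -/
lemma conj_apply_const_single_last_eq_zero
    (hQQ : ∀ u v, rhoDualXiM n m u (Q v) = rhoDualXiM n m v (Q u))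
    (hn : 1 < n) (hm : 1 ≤ m) (v : Fin n → ℂ) :
    Q v (fun _ => Pi.single (Fin.last n) 1) = 0 := by
  set E : Fin m → Fin (n+1) → ℂ := fun _ => Pi.single (Fin.last n) 1
  set i₀ : Fin m := ⟨0, hm⟩
  have hE : Function.update E i₀ (Pi.single (Fin.last n) 1) = E := Function.update_eq_self i₀ E
  have key : ∀ a b z : Fin n → ℂ, (star a ⬝ᵥ z) * Q b E = (star b ⬝ᵥ z) * Q a E := by
    intro a b z
    have h := DFunLike.congr_fun (hQQ a b) (Function.update E i₀ (Fin.snoc z 0))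
    have hk : ∀ (c : Fin n → ℂ) (ψ : Form n m) k, k ≠ i₀ →
        (star c ⬝ᵥ Fin.init (Function.update E i₀ (Fin.snoc z 0) k)) • ψ (Function.update
          (Function.update E i₀ (Fin.snoc z 0)) k (Pi.single (Fin.last n) 1)) = 0 :=
      fun c ψ k hk => by
        rw [Function.update_of_ne hk, init_single_last, dotProduct_zero, zero_smul]
    rwa [rhoDualXiM_apply, rhoDualXiM_apply, neg_inj,
      Finset.sum_eq_single i₀ (fun k _ => hk a _ k) (by simp),
      Finset.sum_eq_single i₀ (fun k _ => hk b _ k) (by simp), Function.update_self,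
      Fin.init_snoc, Function.update_idem, hE, smul_eq_mul, smul_eq_mul] at h
  set j₀ : Fin n := ⟨0, by omega⟩
  set j₁ : Fin n := ⟨1, hn⟩
  have h₁ : Q (Pi.single j₁ 1) E = 0 := by
    simpa [j₀, j₁] using key (Pi.single j₀ 1) (Pi.single j₁ 1) (Pi.single j₀ 1)
  simpa [h₁] using key (Pi.single j₁ 1) v (Pi.single j₁ 1)

lemma conj_eq_zero (hQ : ∀ v (σ : Equiv.Perm (Fin m)) x, Q v (x ∘ σ) = Q v x)
    (hPQ : ∀ u v, rhoDualXiP n m u (Q v) = rhoDualXiM n m v (P u))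
    (hQQ : ∀ u v, rhoDualXiM n m u (Q v) = rhoDualXiM n m v (Q u))
    (hP : ∀ v (x : Fin m → Fin (n+1) → ℂ) i, x i = Pi.single (Fin.last n) 1 → P v x = 0)
    (hn : 1 < n) (hm : 1 ≤ m) : Q = 0 := by
  ext1 v
  refine eq_zero_of_isGraded fun x hx => ?_
  by_cases h : ∀ i, x i = Pi.single (Fin.last n) 1
  · rw [funext h]
    exact conj_apply_const_single_last_eq_zero hQQ hn hm v
  · obtain ⟨i, hi⟩ := not_forall.1 h
    exact conj_apply_eq_zero_of_isGraded_of_ne hQ hPQ hP hx hi v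

lemma apply_comp_swap_zero_succ (hP : ∀ v (σ : Equiv.Perm (Fin m)) x, P v (x ∘ σ) = P v x)
    (hPP : ∀ u v, rhoDualXiP n m u (P v) = rhoDualXiP n m v (P u))
    (y : Fin (m+1) → Fin n → ℂ) (j : Fin m) :
    P (y (Equiv.swap 0 j.succ 0)) (fun i => Fin.snoc (y (Equiv.swap 0 j.succ i.succ)) 0)
      = P (y 0) (fun i => Fin.snoc (y i.succ) 0) := by
  set z : Fin m → Fin (n+1) → ℂ := fun i => Fin.snoc (y i.succ) 0
  have hswap : (fun i => (Fin.snoc (y (Equiv.swap 0 j.succ i.succ)) 0 : Fin (n+1) → ℂ))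
      = Function.update z j (Fin.snoc (y 0) 0) := by
    funext i
    rcases eq_or_ne i j with rfl | hij
    · rw [Equiv.swap_apply_right, Function.update_self]
    · rw [Equiv.swap_apply_of_ne_of_ne (Fin.succ_ne_zero i) (Fin.succ_injective _ |>.ne hij),
        Function.update_of_ne hij]
  have h := apply_update_snoc_comm hP hPP ((isGraded_snoc fun i => y i.succ).update_single_last j)
    (Function.update_self ..) (y 0) (y j.succ)
  rw [Function.update_idem, Function.update_idem, ← hswap, Function.update_eq_self] at h
  rwa [Equiv.swap_apply_left]

lemma apply_comp_perm (hP : ∀ v (σ : Equiv.Perm (Fin m)) x, P v (x ∘ σ) = P v x)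
    (hPP : ∀ u v, rhoDualXiP n m u (P v) = rhoDualXiP n m v (P u))
    (σ : Equiv.Perm (Fin (m+1))) (y : Fin (m+1) → Fin n → ℂ) :
    P (y (σ 0)) (fun i => Fin.snoc (y (σ i.succ)) 0)
      = P (y 0) (fun i => Fin.snoc (y i.succ) 0) := by
  refine Equiv.Perm.comp_eq_of_comp_swap_eq
    (F := fun y => P (y 0) (fun i => Fin.snoc (y i.succ) 0)) (fun a b y => ?_) σ y
  induction a using Fin.cases <;> induction b using Fin.cases
  · simp
  · exact apply_comp_swap_zero_succ hP hPP y _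
  · rw [Equiv.swap_comm]
    exact apply_comp_swap_zero_succ hP hPP y _
  · rename_i a b
    simp only [Function.comp_apply, Equiv.swap_apply_of_ne_of_ne (Fin.succ_ne_zero a).symm
      (Fin.succ_ne_zero b).symm, (Fin.succ_injective m).swap_apply]
    exact hP (y 0) (Equiv.swap a b) (fun i => Fin.snoc (y i.succ) 0)

end Relations

section RealLinear

variable (f : (Fin n → ℂ) →ₗ[ℝ] Form n m)

lemma rhoDual_xi_comm_components
    (hsym : ∀ u v, rhoDual n m (xi n u) (f v) = rhoDual n m (xi n v) (f u)) (u v : Fin n → ℂ) :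
    rhoDualXiP n m u (f.complexLinearPart v) = rhoDualXiP n m v (f.complexLinearPart u)
    ∧ rhoDualXiP n m u (f.conjLinearPart v) = rhoDualXiM n m v (f.complexLinearPart u)
    ∧ rhoDualXiM n m u (f.conjLinearPart v) = rhoDualXiM n m v (f.conjLinearPart u) := by
  refine LinearMap.comm_components_of_add_apply_add_comm _ _ _ _ (fun u v => ?_) u v
  simpa only [rhoDual_xi, LinearMap.complexLinearPart_add_conjLinearPart] using hsym u v

lemma sum_rhoDualXiM_complexLinearPart_eq_zero
    (hsym : ∀ u v, rhoDual n m (xi n u) (f v) = rhoDual n m (xi n v) (f u))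
    (htr : ∑ j : Fin n, (rhoDual n m (xi n (Pi.single j 1)) (f (Pi.single j 1))
      + rhoDual n m (xi n (Pi.single j I)) (f (Pi.single j I))) = 0) :
    ∑ j, rhoDualXiM n m (Pi.single j 1) (f.complexLinearPart (Pi.single j 1)) = 0 := by
  have hterm : ∀ u : Fin n → ℂ,
      rhoDual n m (xi n u) (f u) + rhoDual n m (xi n (I • u)) (f (I • u))
        = (4 : ℂ) • rhoDualXiM n m u (f.complexLinearPart u) := fun u => by
    simp only [rhoDual_xi, ← LinearMap.complexLinearPart_add_conjLinearPart f]
    rw [LinearMap.add_apply_add_add_I_smul, (rhoDual_xi_comm_components f hsym u u).2.1]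
    module
  have hI : ∀ j : Fin n, (Pi.single j I : Fin n → ℂ) = I • Pi.single j 1 := fun j => by
    rw [← Pi.single_smul, smul_eq_mul, mul_one]
  simp only [hI, hterm, ← Finset.smul_sum] at htr
  exact (smul_eq_zero.1 htr).resolve_left (by norm_num)

end RealLinear

end EichlerShimura

open EichlerShimura in
/-- Dual version: if `α : 𝔭 → W' = S^m(V)'` is ℝ-linear, symmetric and trace free,
then `α` is ℂ-linear, takes values in `S^m(V_1')` (forms vanishing whenever some
argument equals `e_{n+1}`), and the `(m+1)`-linear form
`(u, v_1, …, v_m) ↦ α(ξ_u)(v_1, …, v_m)` on `V_1` is fully symmetric. -/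
theorem eichler_shimura_harmonic_dual (n m : ℕ) (hn : 1 < n) (hm : 1 ≤ m)
    (α : (Fin n → ℂ) → MultilinearMap ℂ (fun _ : Fin m => (Fin (n+1) → ℂ)) ℂ)
    (hsymval : ∀ v (σ : Equiv.Perm (Fin m)) (x : Fin m → Fin (n+1) → ℂ),
        α v (x ∘ σ) = α v x)
    (hadd : ∀ u v, α (u + v) = α u + α v)
    (hsmul : ∀ (r : ℝ) (v : Fin n → ℂ), α ((r : ℂ) • v) = (r : ℂ) • α v)
    (hsym : ∀ u v, rhoDual n m (xi n u) (α v) = rhoDual n m (xi n v) (α u))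
    (htr : ∑ j : Fin n,
        (rhoDual n m (xi n (Pi.single j 1)) (α (Pi.single j 1))
          + rhoDual n m (xi n (Pi.single j Complex.I)) (α (Pi.single j Complex.I))) = 0) :
    (∀ v, α (Complex.I • v) = Complex.I • α v)
    ∧ (∀ v (x : Fin m → Fin (n+1) → ℂ) (i : Fin m),
        x i = Pi.single (Fin.last n) 1 → α v x = 0)
    ∧ (∀ (σ : Equiv.Perm (Fin (m+1))) (y : Fin (m+1) → Fin n → ℂ),
        α (y (σ 0)) (fun i => Fin.snoc (y (σ i.succ)) 0)
          = α (y 0) (fun i => Fin.snoc (y i.succ) 0)) := by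
  let f : (Fin n → ℂ) →ₗ[ℝ] Form n m :=
    { toFun := α
      map_add' := hadd
      map_smul' := fun r v => by
        rw [RingHom.id_apply, ← Complex.coe_smul, ← Complex.coe_smul, hsmul] }
  set P := f.complexLinearPart
  set Q := f.conjLinearPart
  have hP : ∀ v (σ : Equiv.Perm (Fin m)) x, P v (x ∘ σ) = P v x := fun v σ x => by
    simp [P, LinearMap.complexLinearPart_apply, f, hsymval]
  have hQ : ∀ v (σ : Equiv.Perm (Fin m)) x, Q v (x ∘ σ) = Q v x := fun v σ x => by
    simp [Q, LinearMap.conjLinearPart_apply, f, hsymval]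
  have hrel := rhoDual_xi_comm_components f hsym
  have hPtr := sum_rhoDualXiM_complexLinearPart_eq_zero f hsym htr
  have hvanish : ∀ v (x : Fin m → Fin (n+1) → ℂ) i, x i = Pi.single (Fin.last n) 1 → P v x = 0 :=
    fun v x i hi => apply_eq_zero_of_eq_single_last hP (fun u v => (hrel u v).1) hPtr hi v
  have hQ0 : Q = 0 :=
    conj_eq_zero hQ (fun u v => (hrel u v).2.1) (fun u v => (hrel u v).2.2) hvanish hn hm
  have hαP : ∀ v, α v = P v := fun v => by
    have h := f.complexLinearPart_add_conjLinearPart v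
    rw [show f.conjLinearPart = 0 from hQ0, LinearMap.zero_apply, add_zero] at h
    exact h.symm
  simp only [hαP]
  exact ⟨fun v => map_smul P I v, hvanish, apply_comp_perm hP fun u v => (hrel u v).1⟩
end
end

section
/- Let m ≥ 2 and 1 ≤ k ≤ m−1. For every v ∈ ℂⁿ one has ρ_m(ξ_v^+)(W_k) ⊆ W_{k+1}, ρ_m(ξ_v^-)(W_k) ⊆ W_{k−1}, and hence ρ_m(ξ_v)(W_k) ⊆ W_{k−1} ⊕ W_{k+1}. Moreover, if v ≠ 0 then the restrictions ρ_m(ξ_v^+)|_{W_k} : W_k → W_{k+1} and ρ_m(ξ_v^-)|_{W_k} : W_k → W_{k−1} are both nonzero maps. -/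
open MvPolynomial

noncomputable section

/-!
In the polynomial model `ρ(ξ_v⁺) = (Σ_j v_j x_j) ∂_{n+1}` and `ρ(ξ_v⁻) = x_{n+1} Σ_i v̄_i ∂_i`.
Each term `x_j ∂_i` sends a monomial to a multiple of the monomial with one factor `x_i`
traded for `x_j`, so it keeps the total degree and moves the `x_{n+1}`-degree by `∓1`.
For nonvanishing, with `v_t ≠ 0` take `x_t^k x_{n+1}^{m-k} ∈ W_k`: its image under `ρ(ξ_v⁺)` is
a product of two nonzero polynomials, and under `ρ(ξ_v⁻)` only the `∂_t` term survives.
-/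

lemma X_mul_pderiv_monomial_one {σ R : Type*} [CommSemiring R] (i j : σ) (d : σ →₀ ℕ) :
    X j * pderiv i (monomial d (1 : R))
      = monomial (d - Finsupp.single i 1 + Finsupp.single j 1) (d i : R) := by
  rw [pderiv_monomial, one_mul, X, monomial_mul, one_mul, add_comm]

lemma pderiv_monomial_ne_zero {σ R : Type*} [CommSemiring R] [CharZero R] {d : σ →₀ ℕ}
    {i : σ} (hi : d i ≠ 0) : pderiv i (monomial d (1 : R)) ≠ 0 := by
  simpa [pderiv_monomial] using hi

lemma degree_tsub_single_add_single {σ : Type*} {d : σ →₀ ℕ} {i : σ} (hi : d i ≠ 0) (j : σ) :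
    (d - Finsupp.single i 1 + Finsupp.single j 1).degree = d.degree := by
  have h := congrArg Finsupp.degree
    (tsub_add_cancel_of_le (Finsupp.single_le_iff.mpr (Nat.one_le_iff_ne_zero.mpr hi)))
  rw [map_add, Finsupp.degree_single] at h
  rw [map_add, Finsupp.degree_single, h]

lemma sum_smul_X_castSucc_ne_zero {n : ℕ} {v : Fin n → ℂ} (hv : v ≠ 0) :
    (∑ j : Fin n, v j • X j.castSucc : MvPolynomial (Fin (n+1)) ℂ) ≠ 0 := by
  obtain ⟨t, ht⟩ := Function.ne_iff.mp hv
  intro h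
  have := congrArg (coeff (Finsupp.single t.castSucc 1)) h
  simp [coeff_sum, coeff_X, Finsupp.single_left_inj] at this
  exact ht this

lemma rho_apply (n : ℕ) (M : Matrix (Fin (n+1)) (Fin (n+1)) ℂ)
    (p : MvPolynomial (Fin (n+1)) ℂ) :
    rho n M p = ∑ i, ∑ j, M j i • (X j * pderiv i p) := by
  simp [rho, LinearMap.sum_apply]

lemma rho_add (n : ℕ) (A B : Matrix (Fin (n+1)) (Fin (n+1)) ℂ) :
    rho n (A + B) = rho n A + rho n B := by
  simp only [rho, Matrix.add_apply, add_smul, Finset.sum_add_distrib]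

lemma rho_xiP_apply (n : ℕ) (v : Fin n → ℂ) (p : MvPolynomial (Fin (n+1)) ℂ) :
    rho n (xiP n v) p = (∑ j : Fin n, v j • X j.castSucc) * pderiv (Fin.last n) p := by
  simp [rho_apply, Fin.sum_univ_castSucc, xiP, Finset.sum_mul]

lemma rho_xiM_apply (n : ℕ) (v : Fin n → ℂ) (p : MvPolynomial (Fin (n+1)) ℂ) :
    rho n (xiM n v) p
      = X (Fin.last n) * ∑ i : Fin n, starRingEnd ℂ (v i) • pderiv i.castSucc p := by
  simp [rho_apply, Fin.sum_univ_castSucc, xiM, Finset.mul_sum]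

lemma monomial_mem_Wcomp {n m k : ℕ} {d : Fin (n+1) →₀ ℕ} (hd : d.degree = m)
    (hlast : d (Fin.last n) = m - k) (c : ℂ) : monomial d c ∈ Wcomp n m k := by
  rw [← mul_one c, ← smul_eq_mul, ← smul_monomial]
  exact Submodule.smul_mem _ _
    (Submodule.subset_span ⟨d, (Finsupp.degree_eq_sum d).symm.trans hd, hlast, rfl⟩)

lemma monomial_mem_Wcomp_self {n m k : ℕ} (hk : k ≤ m) (t : Fin n) :
    monomial (Finsupp.single t.castSucc k + Finsupp.single (Fin.last n) (m - k)) 1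
      ∈ Wcomp n m k := by
  refine monomial_mem_Wcomp ?_ ?_ 1
  · simp only [map_add, Finsupp.degree_single]
    omega
  · simp [(Fin.castSucc_lt_last t).ne]

lemma Wcomp_le_comap {n m k : ℕ}
    {f : MvPolynomial (Fin (n+1)) ℂ →ₗ[ℂ] MvPolynomial (Fin (n+1)) ℂ}
    {T : Submodule ℂ (MvPolynomial (Fin (n+1)) ℂ)}
    (h : ∀ d : Fin (n+1) →₀ ℕ, d.degree = m → d (Fin.last n) = m - k →
      f (monomial d 1) ∈ T) :
    Wcomp n m k ≤ T.comap f := by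
  refine Submodule.span_le.mpr ?_
  rintro _ ⟨d, hd, hlast, rfl⟩
  exact h d ((Finsupp.degree_eq_sum d).trans hd) hlast

lemma rho_xiP_mapsTo (n m k : ℕ) (v : Fin n → ℂ) :
    Wcomp n m k ≤ (Wcomp n m (k + 1)).comap (rho n (xiP n v)) := by
  refine Wcomp_le_comap fun d hd hlast => ?_
  rw [rho_xiP_apply, Finset.sum_mul]
  refine Submodule.sum_mem _ fun j _ => ?_
  rw [smul_mul_assoc, X_mul_pderiv_monomial_one]
  refine Submodule.smul_mem _ _ ?_
  by_cases h0 : d (Fin.last n) = 0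
  · simp [h0]
  · refine monomial_mem_Wcomp ((degree_tsub_single_add_single h0 _).trans hd) ?_ _
    simp only [Finsupp.coe_add, Finsupp.coe_tsub, Pi.add_apply, Pi.sub_apply,
      Finsupp.single_eq_same, ne_eq, (Fin.castSucc_lt_last j).ne, not_false_eq_true,
      Finsupp.single_eq_of_ne', add_zero]
    omega

lemma rho_xiM_mapsTo {n m k : ℕ} (hk : k ≤ m) (v : Fin n → ℂ) :
    Wcomp n m k ≤ (Wcomp n m (k - 1)).comap (rho n (xiM n v)) := by
  refine Wcomp_le_comap fun d hd hlast => ?_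
  rw [rho_xiM_apply, Finset.mul_sum]
  refine Submodule.sum_mem _ fun i _ => ?_
  rw [mul_smul_comm, X_mul_pderiv_monomial_one]
  refine Submodule.smul_mem _ _ ?_
  by_cases h0 : d i.castSucc = 0
  · simp [h0]
  · refine monomial_mem_Wcomp ((degree_tsub_single_add_single h0 _).trans hd) ?_ _
    -- rules out `k = 0`, where `m - (k - 1) = m` is not `m - k + 1`
    have hpair : d i.castSucc + d (Fin.last n) ≤ m := by
      have := Finset.sum_le_sum_of_subset (f := d) (Finset.subset_univ {i.castSucc, Fin.last n})
      rwa [Finset.sum_pair (Fin.castSucc_lt_last i).ne, ← Finsupp.degree_eq_sum, hd] at this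
    simp only [Finsupp.coe_add, Finsupp.coe_tsub, Pi.add_apply, Pi.sub_apply, ne_eq,
      (Fin.castSucc_lt_last i).ne', not_false_eq_true, Finsupp.single_eq_of_ne, tsub_zero,
      Finsupp.single_eq_same]
    omega

lemma rho_xi_mapsTo {n m k : ℕ} (hk : k ≤ m) (v : Fin n → ℂ) :
    Wcomp n m k ≤ (Wcomp n m (k - 1) ⊔ Wcomp n m (k + 1)).comap (rho n (xi n v)) := by
  intro w hw
  rw [Submodule.mem_comap, xi, rho_add, LinearMap.add_apply]
  exact add_mem (Submodule.mem_sup_right (rho_xiP_mapsTo n m k v hw))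
    (Submodule.mem_sup_left (rho_xiM_mapsTo hk v hw))

lemma rho_xiP_ne_zero {n : ℕ} {v : Fin n → ℂ} (hv : v ≠ 0) {p : MvPolynomial (Fin (n+1)) ℂ}
    (hp : pderiv (Fin.last n) p ≠ 0) : rho n (xiP n v) p ≠ 0 := by
  rw [rho_xiP_apply]
  exact mul_ne_zero (sum_smul_X_castSucc_ne_zero hv) hp

lemma rho_xiM_monomial_ne_zero {n k l : ℕ} {v : Fin n → ℂ} {t : Fin n} (ht : v t ≠ 0)
    (hk : k ≠ 0) :
    rho n (xiM n v)
      (monomial (Finsupp.single t.castSucc k + Finsupp.single (Fin.last n) l) 1) ≠ 0 := by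
  set d := Finsupp.single t.castSucc k + Finsupp.single (Fin.last n) l
  have hdt : d t.castSucc = k := by simp [d, (Fin.castSucc_lt_last t).ne]
  rw [rho_xiM_apply, Finset.sum_eq_single t]
  · exact mul_ne_zero (X_ne_zero _)
      (smul_ne_zero (by simpa using ht) (pderiv_monomial_ne_zero (hdt ▸ hk)))
  · intro i _ hit
    have : d i.castSucc = 0 := by
      simp [d, (Fin.castSucc_lt_last i).ne, Fin.castSucc_inj, Ne.symm hit]
    simp [pderiv_monomial, this]
  · simp

theorem rho_mapsTo_Wcomp_general (n m k : ℕ) (hk : 1 ≤ k) (hk' : k ≤ m - 1) :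
    (∀ (v : Fin n → ℂ) (w : MvPolynomial (Fin (n+1)) ℂ),
        w ∈ Wcomp n m k → rho n (xiP n v) w ∈ Wcomp n m (k + 1))
    ∧ (∀ (v : Fin n → ℂ) (w : MvPolynomial (Fin (n+1)) ℂ),
        w ∈ Wcomp n m k → rho n (xiM n v) w ∈ Wcomp n m (k - 1))
    ∧ (∀ (v : Fin n → ℂ) (w : MvPolynomial (Fin (n+1)) ℂ),
        w ∈ Wcomp n m k → rho n (xi n v) w ∈ Wcomp n m (k - 1) ⊔ Wcomp n m (k + 1))
    ∧ (∀ v : Fin n → ℂ, v ≠ 0 →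
        (∃ w ∈ Wcomp n m k, rho n (xiP n v) w ≠ 0)
        ∧ (∃ w ∈ Wcomp n m k, rho n (xiM n v) w ≠ 0)) := by
  have hkm : k ≤ m := by omega
  refine ⟨fun v _ hw => rho_xiP_mapsTo n m k v hw, fun v _ hw => rho_xiM_mapsTo hkm v hw,
    fun v _ hw => rho_xi_mapsTo hkm v hw, fun v hv => ?_⟩
  obtain ⟨t, ht⟩ := Function.ne_iff.mp hv
  have hlast : (Finsupp.single t.castSucc k + Finsupp.single (Fin.last n) (m - k))
      (Fin.last n) ≠ 0 := by
    simpa [(Fin.castSucc_lt_last t).ne] using Nat.sub_ne_zero_of_lt (by omega : k < m)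
  exact ⟨⟨_, monomial_mem_Wcomp_self hkm t, rho_xiP_ne_zero hv (pderiv_monomial_ne_zero hlast)⟩,
    ⟨_, monomial_mem_Wcomp_self hkm t, rho_xiM_monomial_ne_zero ht (by omega)⟩⟩

/-- For `1 ≤ k ≤ m-1`: `ρ_m(ξ_v⁺)` maps `W_k` to `W_{k+1}`, `ρ_m(ξ_v⁻)` maps `W_k`
to `W_{k-1}`, hence `ρ_m(ξ_v)` maps `W_k` into `W_{k-1} ⊕ W_{k+1}`; moreover for
`v ≠ 0` both restrictions are nonzero. -/
theorem rho_mapsTo_Wcomp (n m k : ℕ) (hm : 2 ≤ m) (hk : 1 ≤ k) (hk' : k ≤ m - 1) :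
    (∀ (v : Fin n → ℂ) (w : MvPolynomial (Fin (n+1)) ℂ),
        w ∈ Wcomp n m k → rho n (xiP n v) w ∈ Wcomp n m (k + 1))
    ∧ (∀ (v : Fin n → ℂ) (w : MvPolynomial (Fin (n+1)) ℂ),
        w ∈ Wcomp n m k → rho n (xiM n v) w ∈ Wcomp n m (k - 1))
    ∧ (∀ (v : Fin n → ℂ) (w : MvPolynomial (Fin (n+1)) ℂ),
        w ∈ Wcomp n m k → rho n (xi n v) w ∈ Wcomp n m (k - 1) ⊔ Wcomp n m (k + 1))
    ∧ (∀ v : Fin n → ℂ, v ≠ 0 →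
        (∃ w ∈ Wcomp n m k, rho n (xiP n v) w ≠ 0)
        ∧ (∃ w ∈ Wcomp n m k, rho n (xiM n v) w ≠ 0)) :=
  rho_mapsTo_Wcomp_general n m k hk hk'

end
end

section
/- Let m ≥ 1 and let β : ℂⁿ → S^m(V_1') be a ℂ-linear map (identifying 𝔭^+ with ℂⁿ via ξ_v^+ ↦ v) taking values in the symmetric m-linear forms on V vanishing whenever some argument equals e_{n+1}. If ρ_m'(ξ_u^+)β(v) = ρ_m'(ξ_v^+)β(u) for all u, v ∈ ℂⁿ, then the (m+1)-linear form (u, v_1, …, v_m) ↦ β(u)(v_1, …, v_m) on V_1 is symmetric in all m+1 variables. -/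
open MvPolynomial

noncomputable section

/-
Evaluating `ρ'(ξ_u⁺) β(v) = ρ'(ξ_v⁺) β(u)` on a tuple whose `k`-th entry is `e_{n+1}` and whose
other entries lie in `V_1` kills every term but the `k`-th, since `ξ_u⁺` maps `V_1` to `0` and
`e_{n+1}` to `u`. What remains says `β(v)(…, u, …) = β(u)(…, v, …)`: the form may exchange its
first variable with any other one. Together with the symmetry of each `β(v)` this covers all
transpositions of the `m + 1` variables, which generate the symmetric group.
-/

lemma rhoDual_apply (n m : ℕ) (M : Matrix (Fin (n+1)) (Fin (n+1)) ℂ)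
    (φ : MultilinearMap ℂ (fun _ : Fin m => (Fin (n+1) → ℂ)) ℂ)
    (x : Fin m → Fin (n+1) → ℂ) :
    rhoDual n m M φ x = -∑ i : Fin m, φ (Function.update x i (Matrix.toLin' M (x i))) := by
  simp only [rhoDual, neg_apply, sum_apply, MultilinearMap.compLinearMap_apply]
  congr 1
  refine Finset.sum_congr rfl fun i _ => congrArg φ (funext fun j => ?_)
  rcases eq_or_ne j i with rfl | h
  · simp
  · simp [Function.update_of_ne h]

lemma toLin'_xiP_apply (n : ℕ) (u : Fin n → ℂ) (z : Fin (n+1) → ℂ) :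
    Matrix.toLin' (xiP n u) z = z (Fin.last n) • (Fin.snoc u 0 : Fin (n+1) → ℂ) := by
  funext k
  rw [Matrix.toLin'_apply]
  induction k using Fin.lastCases with
  | last => simp [Matrix.mulVec, dotProduct, xiP]
  | cast p =>
    simp only [Matrix.mulVec, dotProduct, xiP, Matrix.of_apply, Pi.smul_apply,
      Fin.snoc_castSucc, smul_eq_mul]
    rw [Finset.sum_eq_single (Fin.last n) (fun b _ hb => by simp [hb]) (by simp)]
    simp [mul_comm]

lemma rhoDual_xiP_apply_update_single (n m : ℕ) (u : Fin n → ℂ)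
    (φ : MultilinearMap ℂ (fun _ : Fin m => (Fin (n+1) → ℂ)) ℂ)
    (w : Fin m → Fin (n+1) → ℂ) (k : Fin m) (hw : ∀ i ≠ k, w i (Fin.last n) = 0) :
    rhoDual n m (xiP n u) φ (Function.update w k (Pi.single (Fin.last n) 1))
      = -φ (Function.update w k (Fin.snoc u 0)) := by
  rw [rhoDual_apply, Finset.sum_eq_single k]
  · rw [Function.update_self, toLin'_xiP_apply]
    simp
  · intro i _ hi
    rw [Function.update_of_ne hi, toLin'_xiP_apply, hw i hi, zero_smul]
    exact φ.map_coord_zero i (Function.update_self _ _ _)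
  · simp

lemma apply_update_snoc_comm (n m : ℕ)
    (β : (Fin n → ℂ) → MultilinearMap ℂ (fun _ : Fin m => (Fin (n+1) → ℂ)) ℂ)
    (hsym : ∀ u v, rhoDual n m (xiP n u) (β v) = rhoDual n m (xiP n v) (β u))
    (u v : Fin n → ℂ) (w : Fin m → Fin (n+1) → ℂ) (k : Fin m)
    (hw : ∀ i ≠ k, w i (Fin.last n) = 0) :
    β v (Function.update w k (Fin.snoc u 0)) = β u (Function.update w k (Fin.snoc v 0)) := by
  have h := DFunLike.congr_fun (hsym u v) (Function.update w k (Pi.single (Fin.last n) 1))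
  rwa [rhoDual_xiP_apply_update_single n m u _ w k hw,
    rhoDual_xiP_apply_update_single n m v _ w k hw, neg_inj] at h

lemma apply_comp_perm_of_apply_comp_swap {ι α γ : Type*} [DecidableEq ι] [Finite ι]
    (F : (ι → α) → γ) (hF : ∀ a b, a ≠ b → ∀ y, F (y ∘ Equiv.swap a b) = F y)
    (σ : Equiv.Perm ι) (y : ι → α) : F (y ∘ σ) = F y := by
  induction σ using Equiv.Perm.swap_induction_on' generalizing y with
  | one => rfl
  | mul_swap σ a b hab ih => exact (hF a b hab (y ∘ σ)).trans (ih y)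

def uncurriedForm {n m : ℕ}
    (β : (Fin n → ℂ) → MultilinearMap ℂ (fun _ : Fin m => (Fin (n+1) → ℂ)) ℂ)
    (y : Fin (m+1) → Fin n → ℂ) : ℂ :=
  β (y 0) (fun i => Fin.snoc (y i.succ) 0)

section

variable {n m : ℕ} (β : (Fin n → ℂ) → MultilinearMap ℂ (fun _ : Fin m => (Fin (n+1) → ℂ)) ℂ)

lemma uncurriedForm_comp_swap_zero_succ
    (hsym : ∀ u v, rhoDual n m (xiP n u) (β v) = rhoDual n m (xiP n v) (β u))
    (k : Fin m) (y : Fin (m+1) → Fin n → ℂ) :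
    uncurriedForm β (y ∘ Equiv.swap 0 k.succ) = uncurriedForm β y := by
  set w : Fin m → Fin (n+1) → ℂ := fun i => Fin.snoc (y i.succ) 0
  have hw : ∀ i ≠ k, w i (Fin.last n) = 0 := fun i _ => by simp [w]
  have hargs : (fun i => Fin.snoc (y (Equiv.swap 0 k.succ i.succ)) 0
      : Fin m → Fin (n+1) → ℂ) = Function.update w k (Fin.snoc (y 0) 0) := by
    funext i
    rcases eq_or_ne i k with rfl | hi
    · simp
    · rw [Function.update_of_ne hi, Equiv.swap_apply_of_ne_of_ne (Fin.succ_ne_zero i)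
        ((Fin.succ_injective _).ne hi)]
  calc uncurriedForm β (y ∘ Equiv.swap 0 k.succ)
      = β (y k.succ) (Function.update w k (Fin.snoc (y 0) 0)) := by
        simp only [uncurriedForm, Function.comp_apply, Equiv.swap_apply_left, hargs]
    _ = β (y 0) (Function.update w k (Fin.snoc (y k.succ) 0)) :=
        apply_update_snoc_comm n m β hsym _ _ w k hw
    _ = uncurriedForm β y := congrArg (β (y 0)) (Function.update_eq_self k w)

lemma uncurriedForm_comp_swap_succ_succ
    (hsymval : ∀ v (σ : Equiv.Perm (Fin m)) (x : Fin m → Fin (n+1) → ℂ),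
        β v (x ∘ σ) = β v x)
    (j k : Fin m) (y : Fin (m+1) → Fin n → ℂ) :
    uncurriedForm β (y ∘ Equiv.swap j.succ k.succ) = uncurriedForm β y := by
  have h0 : Equiv.swap j.succ k.succ 0 = 0 :=
    Equiv.swap_apply_of_ne_of_ne (Fin.succ_ne_zero j).symm (Fin.succ_ne_zero k).symm
  simp only [uncurriedForm, Function.comp_apply, h0, (Fin.succ_injective m).swap_apply]
  exact hsymval (y 0) (Equiv.swap j k) (fun i => Fin.snoc (y i.succ) 0)

lemma uncurriedForm_comp_perm
    (hsymval : ∀ v (σ : Equiv.Perm (Fin m)) (x : Fin m → Fin (n+1) → ℂ),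
        β v (x ∘ σ) = β v x)
    (hsym : ∀ u v, rhoDual n m (xiP n u) (β v) = rhoDual n m (xiP n v) (β u))
    (σ : Equiv.Perm (Fin (m+1))) (y : Fin (m+1) → Fin n → ℂ) :
    uncurriedForm β (y ∘ σ) = uncurriedForm β y := by
  refine apply_comp_perm_of_apply_comp_swap _ (fun a b hab y => ?_) σ y
  induction a using Fin.cases with
  | zero =>
    induction b using Fin.cases with
    | zero => exact absurd rfl hab
    | succ k => exact uncurriedForm_comp_swap_zero_succ β hsym k y
  | succ j =>
    induction b using Fin.cases with
    | zero => rw [Equiv.swap_comm]; exact uncurriedForm_comp_swap_zero_succ β hsym j y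
    | succ k => exact uncurriedForm_comp_swap_succ_succ β hsymval j k y

end

theorem symmetric_in_all_variables_general (n m : ℕ)
    (β : (Fin n → ℂ) → MultilinearMap ℂ (fun _ : Fin m => (Fin (n+1) → ℂ)) ℂ)
    (hsymval : ∀ v (σ : Equiv.Perm (Fin m)) (x : Fin m → Fin (n+1) → ℂ),
        β v (x ∘ σ) = β v x)
    (hsym : ∀ u v, rhoDual n m (xiP n u) (β v) = rhoDual n m (xiP n v) (β u)) :
    ∀ (σ : Equiv.Perm (Fin (m+1))) (y : Fin (m+1) → Fin n → ℂ),
      β (y (σ 0)) (fun i => Fin.snoc (y (σ i.succ)) 0)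
        = β (y 0) (fun i => Fin.snoc (y i.succ) 0) :=
  uncurriedForm_comp_perm β hsymval hsym

/-- If `β : ℂⁿ → S^m(V_1')` is ℂ-linear with values in the symmetric `m`-linear
forms vanishing on `e_{n+1}`, and `ρ_m'(ξ_u⁺)β(v) = ρ_m'(ξ_v⁺)β(u)` for all
`u, v`, then the `(m+1)`-linear form `(u, v_1, …, v_m) ↦ β(u)(v_1, …, v_m)` on
`V_1` is symmetric in all `m+1` variables. -/
theorem symmetric_in_all_variables (n m : ℕ) (hm : 1 ≤ m)
    (β : (Fin n → ℂ) → MultilinearMap ℂ (fun _ : Fin m => (Fin (n+1) → ℂ)) ℂ)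
    (hadd : ∀ u v, β (u + v) = β u + β v)
    (hsmul : ∀ (c : ℂ) (v : Fin n → ℂ), β (c • v) = c • β v)
    (hsymval : ∀ v (σ : Equiv.Perm (Fin m)) (x : Fin m → Fin (n+1) → ℂ),
        β v (x ∘ σ) = β v x)
    (hvanish : ∀ v (x : Fin m → Fin (n+1) → ℂ) (i : Fin m),
        x i = Pi.single (Fin.last n) (1 : ℂ) → β v x = 0)
    (hsym : ∀ u v, rhoDual n m (xiP n u) (β v) = rhoDual n m (xiP n v) (β u)) :
    ∀ (σ : Equiv.Perm (Fin (m+1))) (y : Fin (m+1) → Fin n → ℂ),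
      β (y (σ 0)) (fun i => Fin.snoc (y (σ i.succ)) 0)
        = β (y 0) (fun i => Fin.snoc (y i.succ) 0) :=
  symmetric_in_all_variables_general n m β hsymval hsym

end
end

section
/- Let m ≥ 1 and 1 ≤ j ≤ m. Let β : 𝔭 → W_j be conjugate-ℂ-linear, i.e. β(ξ_{iv}) = −i·β(ξ_v) for all v ∈ ℂⁿ, so that β(ξ_v) = Σ_{i=1}^n v̄_i β(ξ_{e_i}). If ρ_m(ξ_u^-)β(ξ_v) = ρ_m(ξ_v^-)β(ξ_u) for all u, v ∈ ℂⁿ, then the tensor Σ_{i=1}^n e_i ⊗ β_i ∈ V_1 ⊗ S^j(V_1), where β(ξ_{e_i}) = β_i · e_{n+1}^{m−j} with β_i ∈ S^j(V_1), lies in the image of the natural embedding S^{j+1}(V_1) ↪ V_1 ⊗ S^j(V_1), i.e. it is a symmetric tensor. -/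
open MvPolynomial

noncomputable section

/-! Write `β(ξ_{e_i}) = q_i · x_{n+1}^{m-j}` with `q_i` homogeneous of degree `j` in
`x_1, …, x_n`. Since `ρ(ξ_{e_a}⁻) = x_{n+1} ∂_a`, the symmetry hypothesis on basis vectors says
`∂_a q_b = ∂_b q_a`. By Euler's identity `g = Σ_a x_a q_a` then satisfies `∂_i g = (j+1) q_i`,
and `g ↦ (Σ_i e_i ⊗ ∂_i g) / (j+1)` is the embedding `S^{j+1}(V_1) ↪ V_1 ⊗ S^j(V_1)` in the
polynomial model. -/

namespace MvPolynomial

variable {σ R : Type*} [CommSemiring R] [Fintype σ]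

theorem isHomogeneous_sum_X_mul {k : ℕ} {q : σ → MvPolynomial σ R}
    (hq : ∀ a, (q a).IsHomogeneous k) : (∑ a, X a * q a).IsHomogeneous (k + 1) :=
  IsHomogeneous.sum _ _ _ fun a _ => by
    simpa only [add_comm 1 k] using (isHomogeneous_X R a).mul (hq a)

theorem pderiv_sum_X_mul_of_pderiv_comm [DecidableEq σ] {k : ℕ} {q : σ → MvPolynomial σ R}
    (hq : ∀ a, (q a).IsHomogeneous k) (hcomm : ∀ a b, pderiv a (q b) = pderiv b (q a))
    (i : σ) : pderiv i (∑ a, X a * q a) = (k + 1) • q i := by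
  have hterm : ∀ a, pderiv i (X a * q a) = (if a = i then q i else 0) + X a * pderiv a (q i) := by
    intro a
    rw [pderiv_mul, pderiv_X, hcomm, Pi.single_apply]
    split_ifs with h <;> simp [h]
  simp only [map_sum, hterm, Finset.sum_add_distrib, Finset.sum_ite_eq', Finset.mem_univ,
    if_true, (hq i).sum_X_mul_pderiv, add_smul, one_smul, add_comm]

end MvPolynomial

theorem exists_isHomogeneous_of_mem_Wcomp {n m k : ℕ} (hk : k ≤ m)
    {p : MvPolynomial (Fin (n+1)) ℂ} (hp : p ∈ Wcomp n m k) :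
    ∃ q : MvPolynomial (Fin n) ℂ, q.IsHomogeneous k ∧
      p = rename Fin.castSucc q * X (Fin.last n) ^ (m - k) := by
  suffices Wcomp n m k ≤ (homogeneousSubmodule (Fin n) ℂ k).map
      (LinearMap.mulRight ℂ (X (Fin.last n) ^ (m - k)) ∘ₗ (rename Fin.castSucc).toLinearMap) by
    obtain ⟨q, hq, rfl⟩ := this hp
    exact ⟨q, hq, rfl⟩
  refine Submodule.span_le.mpr ?_
  rintro _ ⟨d, hsum, hlast, rfl⟩
  refine ⟨∏ i : Fin n, X i ^ d (Fin.castSucc i), ?_, ?_⟩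
  · have hdeg : ∑ i : Fin n, d (Fin.castSucc i) = k := by
      rw [Fin.sum_univ_castSucc, hlast] at hsum
      omega
    rw [SetLike.mem_coe, mem_homogeneousSubmodule, ← hdeg]
    exact IsHomogeneous.prod _ _ _ fun i _ => isHomogeneous_X_pow i _
  · rw [monomial_eq, C_1, one_mul, Finsupp.prod_fintype _ _ fun _ => pow_zero _,
      Fin.prod_univ_castSucc, hlast]
    simp

theorem xiM_castSucc_apply (n : ℕ) (v : Fin n → ℂ) (a : Fin n) (j : Fin (n+1)) :
    xiM n v (Fin.castSucc a) j = 0 := by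
  simp [xiM, (Fin.castSucc_lt_last a).ne]

theorem xiM_apply_last (n : ℕ) (v : Fin n → ℂ) (i : Fin (n+1)) :
    xiM n v i (Fin.last n) = 0 := by
  simp [xiM]

theorem xiM_last_castSucc (n : ℕ) (v : Fin n → ℂ) (b : Fin n) :
    xiM n v (Fin.last n) (Fin.castSucc b) = starRingEnd ℂ (v b) := by
  simp [xiM]

theorem rho_xiM (n : ℕ) (v : Fin n → ℂ) (p : MvPolynomial (Fin (n+1)) ℂ) :
    rho n (xiM n v) p = X (Fin.last n) * ∑ b, starRingEnd ℂ (v b) • pderiv (Fin.castSucc b) p := by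
  simp [rho, Fin.sum_univ_castSucc, xiM_castSucc_apply, xiM_apply_last, xiM_last_castSucc,
    Finset.mul_sum]

theorem rho_xiM_single (n : ℕ) (a : Fin n) (p : MvPolynomial (Fin (n+1)) ℂ) :
    rho n (xiM n (Pi.single a 1)) p = X (Fin.last n) * pderiv (Fin.castSucc a) p := by
  simp [rho_xiM, Pi.single_apply]

section

variable {R : Type*} [CommSemiring R] {n : ℕ}

theorem pderiv_castSucc_rename_mul_X_last_pow (a : Fin n) (q : MvPolynomial (Fin n) R) (e : ℕ) :
    pderiv (Fin.castSucc a) (rename Fin.castSucc q * X (Fin.last n) ^ e)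
      = rename Fin.castSucc (pderiv a q) * X (Fin.last n) ^ e := by
  rw [pderiv_mul, pderiv_rename (Fin.castSucc_injective n), pderiv_pow,
    pderiv_X_of_ne (Fin.castSucc_lt_last a).ne', mul_zero, mul_zero, add_zero]

theorem rename_castSucc_support_last_eq_zero (q : MvPolynomial (Fin n) R) :
    ∀ d ∈ (rename Fin.castSucc q).support, d (Fin.last n) = 0 := by
  intro d hd
  rw [support_rename_of_injective (Fin.castSucc_injective n), Finset.mem_image] at hd
  obtain ⟨d, -, rfl⟩ := hd
  exact Finsupp.mapDomain_of_notMem_range _ _ fun ⟨b, hb⟩ => (Fin.castSucc_lt_last b).ne hb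

end

theorem symmetric_relation_implies_symmetric_tensor_general (n m j : ℕ)
    (hjm : j ≤ m)
    (β : (Fin n → ℂ) → MvPolynomial (Fin (n+1)) ℂ)
    (hWj : ∀ v, β v ∈ Wcomp n m j)
    (hsym : ∀ u v, rho n (xiM n u) (β v) = rho n (xiM n v) (β u)) :
    ∃ g : MvPolynomial (Fin (n+1)) ℂ, g.IsHomogeneous (j + 1) ∧
      (∀ d ∈ g.support, d (Fin.last n) = 0) ∧
      (∀ i : Fin n, ((j : ℂ) + 1) • β (Pi.single i 1)
        = pderiv (Fin.castSucc i) g * X (Fin.last n) ^ (m - j)) := by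
  choose q hq hβ using fun i => exists_isHomogeneous_of_mem_Wcomp hjm (hWj (Pi.single i 1))
  have hcomm : ∀ a b, pderiv a (q b) = pderiv b (q a) := by
    intro a b
    have h := hsym (Pi.single a 1) (Pi.single b 1)
    rw [rho_xiM_single, rho_xiM_single, hβ, hβ, pderiv_castSucc_rename_mul_X_last_pow,
      pderiv_castSucc_rename_mul_X_last_pow] at h
    exact rename_injective _ (Fin.castSucc_injective n)
      (mul_right_cancel₀ (pow_ne_zero _ (X_ne_zero _)) (mul_left_cancel₀ (X_ne_zero _) h))
  refine ⟨rename Fin.castSucc (∑ a, X a * q a), (isHomogeneous_sum_X_mul hq).rename_isHomogeneous,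
    rename_castSucc_support_last_eq_zero _, fun i => ?_⟩
  rw [pderiv_rename (Fin.castSucc_injective n), pderiv_sum_X_mul_of_pderiv_comm hq hcomm, hβ,
    map_nsmul, smul_mul_assoc, ← Nat.cast_smul_eq_nsmul ℂ, Nat.cast_succ]

/-- If `β : 𝔭 → W_j` is conjugate-ℂ-linear and `ρ_m(ξ_u⁻)β(ξ_v) = ρ_m(ξ_v⁻)β(ξ_u)`
for all `u, v`, then the tensor `Σ e_i ⊗ β_i ∈ V_1 ⊗ S^j(V_1)` (where
`β(ξ_{e_i}) = β_i · e_{n+1}^{m-j}`) is symmetric, i.e. lies in the image of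
`S^{j+1}(V_1) ↪ V_1 ⊗ S^j(V_1)`; in the polynomial model this means there is a
homogeneous `g` of degree `j+1` in the first `n` variables with
`(j+1)·β_i = ∂_i g` for all `i`. -/
theorem symmetric_relation_implies_symmetric_tensor (n m j : ℕ)
    (hm : 1 ≤ m) (hj : 1 ≤ j) (hjm : j ≤ m)
    (β : (Fin n → ℂ) → MvPolynomial (Fin (n+1)) ℂ)
    (hadd : ∀ u v, β (u + v) = β u + β v)
    (hconj : ∀ (c : ℂ) (v : Fin n → ℂ), β (c • v) = (starRingEnd ℂ) c • β v)
    (hWj : ∀ v, β v ∈ Wcomp n m j)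
    (hsym : ∀ u v, rho n (xiM n u) (β v) = rho n (xiM n v) (β u)) :
    ∃ g : MvPolynomial (Fin (n+1)) ℂ, g.IsHomogeneous (j + 1) ∧
      (∀ d ∈ g.support, d (Fin.last n) = 0) ∧
      (∀ i : Fin n, ((j : ℂ) + 1) • β (Pi.single i 1)
        = pderiv (Fin.castSucc i) g * X (Fin.last n) ^ (m - j)) :=
  symmetric_relation_implies_symmetric_tensor_general n m j hjm β hWj hsym

end
end

section
/- Let n ≥ 2, m ≥ 1 and 1 ≤ j ≤ m. Define the conjugate-ℂ-linear map β : 𝔭 → W_j by β(ξ_v) = v̄_2 · e_1^j e_{n+1}^{m−j} − v̄_1 · (e_1^{j−1} e_2) e_{n+1}^{m−j}. Then ρ_m(ξ_{e_2}^-) β(ξ_{e_1}) ≠ ρ_m(ξ_{e_1}^-) β(ξ_{e_2}); in particular β does not satisfy the symmetry relation ρ_m(ξ_u^-)β(ξ_v) = ρ_m(ξ_v^-)β(ξ_u) for all u, v. -/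
/-!
The lowering operator `ρ_m(ξ_{e_a}⁻)` is the derivation `x_{n+1} ∂_a`. Hence the two sides are
`-x_1^{j-1} x_{n+1}^{m-j+1}` and `j · x_1^{j-1} x_{n+1}^{m-j+1}`; evaluated at the all-ones point
they give `-1` and `j`, which differ in characteristic zero.
-/

open MvPolynomial

noncomputable section

lemma rho_single_apply (n : ℕ) (k l : Fin (n+1)) (c : ℂ) (p : MvPolynomial (Fin (n+1)) ℂ) :
    rho n (Matrix.single k l c) p = c • (X k * pderiv l p) := by
  simp [rho, Matrix.single_apply, ite_and]

lemma xiM_single (n : ℕ) (a : Fin n) :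
    xiM n (Pi.single a 1) = Matrix.single (Fin.last n) a.castSucc 1 := by
  ext i j
  simp only [xiM, Matrix.of_apply, Matrix.single_apply, Pi.single_apply, Fin.ext_iff]
  split_ifs <;> simp_all; omega

lemma rho_xiM_single_apply (n : ℕ) (a : Fin n) (p : MvPolynomial (Fin (n+1)) ℂ) :
    rho n (xiM n (Pi.single a 1)) p = X (Fin.last n) * pderiv a.castSucc p := by
  rw [xiM_single, rho_single_apply, one_smul]

/-- The highest weight vector `β(ξ_v) = v̄_2 · e_1^j e_{n+1}^{m-j} - v̄_1 ·
(e_1^{j-1}e_2) e_{n+1}^{m-j}` of the complementary component does not satisfy the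
symmetry relation: `ρ_m(ξ_{e_2}⁻)β(ξ_{e_1}) ≠ ρ_m(ξ_{e_1}⁻)β(ξ_{e_2})`. -/
theorem highest_weight_vector_not_symmetric (n m j : ℕ)
    (hn : 2 ≤ n)
    (β : (Fin n → ℂ) → MvPolynomial (Fin (n+1)) ℂ)
    (hβ : ∀ v, β v =
        (starRingEnd ℂ) (v ⟨1, by omega⟩) •
            (X (0 : Fin (n+1)) ^ j * X (Fin.last n) ^ (m - j))
          - (starRingEnd ℂ) (v ⟨0, by omega⟩) •
              (X (0 : Fin (n+1)) ^ (j - 1) * X (⟨1, by omega⟩ : Fin (n+1)) *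
                X (Fin.last n) ^ (m - j))) :
    rho n (xiM n (Pi.single ⟨1, by omega⟩ 1)) (β (Pi.single ⟨0, by omega⟩ 1))
        ≠ rho n (xiM n (Pi.single ⟨0, by omega⟩ 1)) (β (Pi.single ⟨1, by omega⟩ 1))
    ∧ ¬ (∀ u v, rho n (xiM n u) (β v) = rho n (xiM n v) (β u)) := by
  have hn₀ : n ≠ 0 := by omega
  have hn₁ : n ≠ 1 := by omega
  have eval_lhs : eval 1
      (rho n (xiM n (Pi.single ⟨1, by omega⟩ 1)) (β (Pi.single ⟨0, by omega⟩ 1))) = -1 := by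
    simp [hβ, rho_xiM_single_apply, Fin.ext_iff, pderiv_X, hn₁]
  have eval_rhs : eval 1
      (rho n (xiM n (Pi.single ⟨0, by omega⟩ 1)) (β (Pi.single ⟨1, by omega⟩ 1))) = j := by
    simp [hβ, rho_xiM_single_apply, Fin.ext_iff, pderiv_X, hn₀]
  have hne : rho n (xiM n (Pi.single ⟨1, by omega⟩ 1)) (β (Pi.single ⟨0, by omega⟩ 1))
      ≠ rho n (xiM n (Pi.single ⟨0, by omega⟩ 1)) (β (Pi.single ⟨1, by omega⟩ 1)) := by
    intro h
    have : (-1 : ℂ) = j := by rw [← eval_lhs, ← eval_rhs, h]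
    exact Nat.cast_add_one_ne_zero j (by linear_combination -this)
  exact ⟨hne, fun hsymm => hne (hsymm _ _)⟩

end
end

section
/- Let n = 1 and m ≥ 1, so V = ℂ², V_1 = ℂe_1, and W = S^m(ℂ²). Suppose α : 𝔭 → W is conjugate-ℂ-linear (α(ξ_{iv}) = −i·α(ξ_v) for all v ∈ ℂ) and satisfies (i) ρ_m(ξ_u)α(ξ_v) = ρ_m(ξ_v)α(ξ_u) for all u, v ∈ ℂ, and (ii) ρ_m(ξ_1)α(ξ_1) + ρ_m(ξ_i)α(ξ_i) = 0. Then α takes values in the top component W_m = ℂ·e_1^m, i.e. P_k(α(ξ_v)) = 0 for all v ∈ ℂ and all 0 ≤ k ≤ m−1. -/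
open MvPolynomial

noncomputable section

/-
Writing `β = α(ξ_1)`, conjugate-linearity gives `α(ξ_v) = v̄ β`. Since
`ρ(ξ_v) = v x₁ ∂₂ + v̄ x₂ ∂₁`, the trace condition reads `2 x₁ ∂₂ β = 0`, so `β` does
not involve `x₂` and every coefficient of `x₁^k x₂^(m-k)` with `k < m` vanishes.
-/

lemma map_smul_eq_conj_smul {E M : Type*} [AddCommGroup E] [Module ℂ E]
    [AddCommGroup M] [Module ℂ M] {α : E → M}
    (hadd : ∀ u v, α (u + v) = α u + α v)
    (hsmul : ∀ (r : ℝ) v, α ((r : ℂ) • v) = (r : ℂ) • α v)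
    (hconj : ∀ v, α (Complex.I • v) = (-Complex.I) • α v) (z : ℂ) (v : E) :
    α (z • v) = (starRingEnd ℂ) z • α v := by
  have hz : z • v = ((z.re : ℝ) : ℂ) • v + ((z.im : ℝ) : ℂ) • (Complex.I • v) := by
    rw [smul_smul, ← add_smul, Complex.re_add_im]
  have hconj_z : (starRingEnd ℂ) z = (z.re : ℂ) + (z.im : ℂ) * (-Complex.I) := by
    apply Complex.ext <;> simp
  rw [hz, hadd, hsmul, hsmul, hconj, hconj_z, add_smul, mul_smul]

lemma coeff_eq_zero_of_pderiv_eq_zero {σ R : Type*} [CommSemiring R] [NoZeroDivisors R]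
    [CharZero R] {i : σ} {p : MvPolynomial σ R} (h : pderiv i p = 0) {d : σ →₀ ℕ}
    (hd : d i ≠ 0) : coeff d p = 0 := by
  have hd' : d - Finsupp.single i 1 + Finsupp.single i 1 = d :=
    tsub_add_cancel_of_le (Finsupp.single_le_iff.mpr (Nat.one_le_iff_ne_zero.mpr hd))
  have := coeff_pderiv (i := i) p (d - Finsupp.single i 1)
  rw [h, coeff_zero, hd', eq_comm, mul_eq_zero] at this
  exact this.resolve_right (Nat.cast_add_one_ne_zero _)

lemma rho_xi_apply (v : Fin 1 → ℂ) (p : MvPolynomial (Fin 2) ℂ) :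
    rho 1 (xi 1 v) p
      = v 0 • (X 0 * pderiv 1 p) + (starRingEnd ℂ) (v 0) • (X 1 * pderiv 0 p) := by
  simp only [Nat.reduceAdd, rho, xi, xiP, Order.lt_one_iff, Fin.val_eq_zero_iff, Fin.isValue, Fin.last,
    Fin.mk_one, xiM, Matrix.add_apply, Matrix.of_apply, Fin.sum_univ_two, true_and, Fin.coe_ofNat_eq_mod,
    Nat.zero_mod, Fin.zero_eta, dite_eq_ite, zero_ne_one, false_and, ↓reduceDIte, add_zero, ite_smul,
    zero_smul, one_ne_zero, zero_add, dite_smul, ↓reduceIte, LinearMap.add_apply, LinearMap.smul_apply,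
    LinearMap.coe_comp, Derivation.coeFn_coe, Function.comp_apply, LinearMap.mulLeft_apply]
  abel

lemma rho_xi_one_add_rho_xi_I (p : MvPolynomial (Fin 2) ℂ) :
    rho 1 (xi 1 fun _ => 1) p + rho 1 (xi 1 fun _ => Complex.I) ((-Complex.I) • p)
      = (2 : ℂ) • (X 0 * pderiv 1 p) := by
  rw [map_smul, rho_xi_apply, rho_xi_apply, map_one, Complex.conj_I]
  match_scalars <;> ring_nf <;> norm_num [Complex.I_sq]

theorem riemann_surface_case_general (m : ℕ) (hm : 1 ≤ m)
    (α : (Fin 1 → ℂ) → MvPolynomial (Fin 2) ℂ)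
    (hadd : ∀ u v, α (u + v) = α u + α v)
    (hsmul : ∀ (r : ℝ) (v : Fin 1 → ℂ), α ((r : ℂ) • v) = (r : ℂ) • α v)
    (hconj : ∀ v, α (Complex.I • v) = (-Complex.I) • α v)
    (htr : rho 1 (xi 1 (fun _ => 1)) (α (fun _ => 1))
        + rho 1 (xi 1 (fun _ => Complex.I)) (α (fun _ => Complex.I)) = 0) :
    ∀ (v : Fin 1 → ℂ) (k : ℕ), k ≤ m - 1 →
      coeff (Finsupp.single (0 : Fin 2) k + Finsupp.single (1 : Fin 2) (m - k))
        (α v) = 0 := by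
  intro v k hk
  have hvec : ∀ w : Fin 1 → ℂ, w = w 0 • fun _ => 1 :=
    fun w => funext fun j => by simp [Subsingleton.elim j 0]
  have hα : ∀ w, α w = (starRingEnd ℂ) (w 0) • α (fun _ => 1) := fun w => by
    rw [hvec w, map_smul_eq_conj_smul hadd hsmul hconj]
    simp
  have hβ : pderiv 1 (α fun _ => 1) = 0 := by
    rw [hα (fun _ => Complex.I), Complex.conj_I, rho_xi_one_add_rho_xi_I] at htr
    simpa [X_ne_zero] using htr
  rw [hα, coeff_smul, coeff_eq_zero_of_pderiv_eq_zero hβ (by simp; omega), smul_zero]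

/-- The Riemann surface case `n = 1`: if `α : 𝔭 → W = S^m(ℂ²)` is ℝ-linear,
conjugate-ℂ-linear, symmetric and trace free, then `α` takes values in the top
component `W_m = ℂ·e_1^m`: all coefficients of `e_1^k e_2^{m-k}` with
`k ≤ m - 1` vanish. -/
theorem riemann_surface_case (m : ℕ) (hm : 1 ≤ m)
    (α : (Fin 1 → ℂ) → MvPolynomial (Fin 2) ℂ)
    (hW : ∀ v, α v ∈ homogeneousSubmodule (Fin 2) ℂ m)
    (hadd : ∀ u v, α (u + v) = α u + α v)
    (hsmul : ∀ (r : ℝ) (v : Fin 1 → ℂ), α ((r : ℂ) • v) = (r : ℂ) • α v)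
    (hconj : ∀ v, α (Complex.I • v) = (-Complex.I) • α v)
    (hsym : ∀ u v, rho 1 (xi 1 u) (α v) = rho 1 (xi 1 v) (α u))
    (htr : rho 1 (xi 1 (fun _ => 1)) (α (fun _ => 1))
        + rho 1 (xi 1 (fun _ => Complex.I)) (α (fun _ => Complex.I)) = 0) :
    ∀ (v : Fin 1 → ℂ) (k : ℕ), k ≤ m - 1 →
      coeff (Finsupp.single (0 : Fin 2) k + Finsupp.single (1 : Fin 2) (m - k))
        (α v) = 0 :=
  riemann_surface_case_general m hm α hadd hsmul hconj htr

end
end
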